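/- arXiv:2101.08491 — 3 statements merged into one kernel-verified Lean document; each statement's English description precedes it below -/
import Mathlib

section
/- If (M,c,h) → (M',c',h') in the extended operational semantics, where M is a GOSC term and h is a GOSC heap (storing only ground-type values), then ν(M) ∪ {c} ⊇ ν(M') ∪ {c'}; that is, GOSC internal reductions never introduce new function or continuation names. -/
set_option maxHeartbeats 1000000
set_option autoImplicit true

namespace OGS

/-! ## Types -/

inductive Ty : Type
  | unit | int | bool
  | ref : Ty → Ty
  | prod : Ty → Ty → Ty
  | arrow : Ty → Ty → Ty
  | cont : Ty → Ty
  deriving DecidableEq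

/-- Ground types ι ::= Unit | Int | Bool | ref ι -/
inductive Ty.Ground : Ty → Prop
  | unit : Ty.Ground .unit
  | int : Ty.Ground .int
  | bool : Ty.Ground .bool
  | ref {ι : Ty} : Ty.Ground ι → Ty.Ground (.ref ι)

/-- GOSC types: reference types restricted to ground contents. -/
def Ty.isGOSC : Ty → Prop
  | .unit => True
  | .int => True
  | .bool => True
  | .ref ι => Ty.Ground ι
  | .prod a b => a.isGOSC ∧ b.isGOSC
  | .arrow a b => a.isGOSC ∧ b.isGOSC
  | .cont a => a.isGOSC

/-- HOS types: no cont constructor. -/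
def Ty.isHOS : Ty → Prop
  | .unit => True
  | .int => True
  | .bool => True
  | .ref a => a.isHOS
  | .prod a b => a.isHOS ∧ b.isHOS
  | .arrow a b => a.isHOS ∧ b.isHOS
  | .cont _ => False

/-- cont- and ref-free types -/
def Ty.crFree : Ty → Prop
  | .unit => True
  | .int => True
  | .bool => True
  | .ref _ => False
  | .prod a b => a.crFree ∧ b.crFree
  | .arrow a b => a.crFree ∧ b.crFree
  | .cont _ => False

inductive Frag | HOSC | GOSC | HOS | GOS
  deriving DecidableEq

def Frag.tyOK : Frag → Ty → Prop
  | .HOSC, _ => True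
  | .GOSC, τ => τ.isGOSC
  | .HOS, τ => τ.isHOS
  | .GOS, τ => τ.isGOSC ∧ τ.isHOS

/-- fragments featuring control (callcc/throw/cont) -/
def Frag.hasCont : Frag → Prop
  | .HOSC => True
  | .GOSC => True
  | .HOS => False
  | .GOS => False

/-! ## Names -/

structure FName where
  id : ℕ
  dom : Ty
  cod : Ty
  deriving DecidableEq

structure CName where
  id : ℕ
  ty : Ty
  deriving DecidableEq

inductive Name
  | fn : FName → Name
  | cn : CName → Name
  deriving DecidableEq

/-- the designated error function name errn : Unit → Unit -/
def errn : FName := ⟨0, .unit, .unit⟩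

/-- the designated terminal continuation names tern_σ -/
def tern (σ : Ty) : CName := ⟨0, σ⟩

/-- ◦ = { tern_σ | σ } -/
def circNames : Set Name := {n | ∃ σ : Ty, n = Name.cn (tern σ)}

/-! ## Terms -/

inductive ArithOp | add | sub | mul
inductive CmpOp | eq | lt

inductive Tm : Type
  | unit | tt | ff
  | int : ℤ → Tm
  | bvar : ℕ → Tm
  | errv : Tm                      -- the designated error variable err : Unit → Unit
  | loc : ℕ → Tm
  | fname : FName → Tm             -- extended syntax: function names as constants
  | hole : Tm                      -- the hole • of contexts / evaluation contexts
  | pair : Tm → Tm → Tm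
  | fst : Tm → Tm
  | snd : Tm → Tm
  | lam : Ty → Tm → Tm             -- de Bruijn
  | fix : Ty → Ty → Tm → Tm        -- fix y (x:σ).M : σ→τ, bvar 0 = x, bvar 1 = y
  | app : Tm → Tm → Tm
  | newref : Ty → Tm → Tm
  | deref : Tm → Tm
  | assign : Tm → Tm → Tm
  | ifte : Tm → Tm → Tm → Tm
  | arith : ArithOp → Tm → Tm → Tm
  | cmp : CmpOp → Tm → Tm → Tm
  | refeq : Tm → Tm → Tm
  | callcc : Ty → Tm → Tm          -- callcc_τ(x.M), binds x
  | throw : Ty → Tm → Tm → Tm      -- throw_τ M to N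
  | contV : Ty → Ty → Tm → Tm      -- cont_τ(K), K : τ ⇒ σ
  | contE : Ty → Tm → CName → Tm   -- extended: cont_τ(K, c)

inductive IsVal : Tm → Prop
  | unit : IsVal .unit
  | tt : IsVal .tt
  | ff : IsVal .ff
  | int (n : ℤ) : IsVal (.int n)
  | bvar (i : ℕ) : IsVal (.bvar i)
  | errv : IsVal .errv
  | loc (ℓ : ℕ) : IsVal (.loc ℓ)
  | fname (f : FName) : IsVal (.fname f)
  | pair {u v : Tm} : IsVal u → IsVal v → IsVal (.pair u v)
  | lam (τ : Ty) (M : Tm) : IsVal (.lam τ M)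
  | fix (σ τ : Ty) (M : Tm) : IsVal (.fix σ τ M)
  | contV (τ σ : Ty) (K : Tm) : IsVal (.contV τ σ K)
  | contE (τ : Ty) (K : Tm) (c : CName) : IsVal (.contE τ K c)

/-- substitution of a (closed) term `V` for de Bruijn index `k` -/
def Tm.subst : Tm → ℕ → Tm → Tm
  | .bvar i, k, V => if i = k then V else if k < i then .bvar (i - 1) else .bvar i
  | .pair a b, k, V => .pair (a.subst k V) (b.subst k V)
  | .fst a, k, V => .fst (a.subst k V)
  | .snd a, k, V => .snd (a.subst k V)
  | .lam τ a, k, V => .lam τ (a.subst (k+1) V)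
  | .fix σ τ a, k, V => .fix σ τ (a.subst (k+2) V)
  | .app a b, k, V => .app (a.subst k V) (b.subst k V)
  | .newref τ a, k, V => .newref τ (a.subst k V)
  | .deref a, k, V => .deref (a.subst k V)
  | .assign a b, k, V => .assign (a.subst k V) (b.subst k V)
  | .ifte a b c, k, V => .ifte (a.subst k V) (b.subst k V) (c.subst k V)
  | .arith op a b, k, V => .arith op (a.subst k V) (b.subst k V)
  | .cmp op a b, k, V => .cmp op (a.subst k V) (b.subst k V)
  | .refeq a b, k, V => .refeq (a.subst k V) (b.subst k V)
  | .callcc τ a, k, V => .callcc τ (a.subst (k+1) V)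
  | .throw τ a b, k, V => .throw τ (a.subst k V) (b.subst k V)
  | .contV τ σ K, k, V => .contV τ σ (K.subst k V)
  | .contE τ K c, k, V => .contE τ (K.subst k V) c
  | t, _, _ => t

/-- simultaneous substitution of a list of closed values for the free variables 0,1,2,… -/
def Tm.msubst (M : Tm) (γ : List Tm) : Tm := γ.foldl (fun N V => N.subst 0 V) M

/-- filling the hole of a context/evaluation context (capturing; does not descend
into the evaluation-context argument of continuation constants, whose hole is their own) -/
def Tm.fill : Tm → Tm → Tm
  | .hole, M => M
  | .pair a b, M => .pair (a.fill M) (b.fill M)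
  | .fst a, M => .fst (a.fill M)
  | .snd a, M => .snd (a.fill M)
  | .lam τ a, M => .lam τ (a.fill M)
  | .fix σ τ a, M => .fix σ τ (a.fill M)
  | .app a b, M => .app (a.fill M) (b.fill M)
  | .newref τ a, M => .newref τ (a.fill M)
  | .deref a, M => .deref (a.fill M)
  | .assign a b, M => .assign (a.fill M) (b.fill M)
  | .ifte a b c, M => .ifte (a.fill M) (b.fill M) (c.fill M)
  | .arith op a b, M => .arith op (a.fill M) (b.fill M)
  | .cmp op a b, M => .cmp op (a.fill M) (b.fill M)
  | .refeq a b, M => .refeq (a.fill M) (b.fill M)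
  | .callcc τ a, M => .callcc τ (a.fill M)
  | .throw τ a b, M => .throw τ (a.fill M) (b.fill M)
  | t, _ => t

/-- list of all subterm occurrences -/
def Tm.subterms : Tm → List Tm
  | .pair a b => .pair a b :: (a.subterms ++ b.subterms)
  | .fst a => .fst a :: a.subterms
  | .snd a => .snd a :: a.subterms
  | .lam τ a => .lam τ a :: a.subterms
  | .fix σ τ a => .fix σ τ a :: a.subterms
  | .app a b => .app a b :: (a.subterms ++ b.subterms)
  | .newref τ a => .newref τ a :: a.subterms
  | .deref a => .deref a :: a.subterms
  | .assign a b => .assign a b :: (a.subterms ++ b.subterms)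
  | .ifte a b c => .ifte a b c :: (a.subterms ++ b.subterms ++ c.subterms)
  | .arith op a b => .arith op a b :: (a.subterms ++ b.subterms)
  | .cmp op a b => .cmp op a b :: (a.subterms ++ b.subterms)
  | .refeq a b => .refeq a b :: (a.subterms ++ b.subterms)
  | .callcc τ a => .callcc τ a :: a.subterms
  | .throw τ a b => .throw τ a b :: (a.subterms ++ b.subterms)
  | .contV τ σ K => .contV τ σ K :: K.subterms
  | .contE τ K c => .contE τ K c :: K.subterms
  | t => [t]

/-- number of occurrences of the (ambient) hole, not counting holes belonging
to continuation constants -/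
def Tm.holeCount : Tm → ℕ
  | .hole => 1
  | .pair a b => a.holeCount + b.holeCount
  | .fst a => a.holeCount
  | .snd a => a.holeCount
  | .lam _ a => a.holeCount
  | .fix _ _ a => a.holeCount
  | .app a b => a.holeCount + b.holeCount
  | .newref _ a => a.holeCount
  | .deref a => a.holeCount
  | .assign a b => a.holeCount + b.holeCount
  | .ifte a b c => a.holeCount + b.holeCount + c.holeCount
  | .arith _ a b => a.holeCount + b.holeCount
  | .cmp _ a b => a.holeCount + b.holeCount
  | .refeq a b => a.holeCount + b.holeCount
  | .callcc _ a => a.holeCount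
  | .throw _ a b => a.holeCount + b.holeCount
  | _ => 0

/-- ν(M): the set of (function and continuation) names occurring in a term -/
def Tm.names (M : Tm) : Set Name :=
  {n | (∃ f, n = Name.fn f ∧ Tm.fname f ∈ M.subterms) ∨
       (∃ c, n = Name.cn c ∧ ∃ τ K, Tm.contE τ K c ∈ M.subterms)}

/-- surface (non-extended) syntax: no function-name constants, no cont_τ(K,c) -/
def Tm.extFree (M : Tm) : Prop :=
  (∀ f, Tm.fname f ∉ M.subterms) ∧ (∀ τ K c, Tm.contE τ K c ∉ M.subterms)

/-- no occurrence of a continuation constant cont_τ(K) -/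
def Tm.contVFree (M : Tm) : Prop := ∀ τ σ K, Tm.contV τ σ K ∉ M.subterms

def Tm.locFree (M : Tm) : Prop := ∀ ℓ, Tm.loc ℓ ∉ M.subterms

/-- syntactic conditions of cr-freeness: no continuation constants and no locations -/
def Tm.crFreeSyn (M : Tm) : Prop :=
  (∀ τ σ K, Tm.contV τ σ K ∉ M.subterms) ∧
  (∀ τ K c, Tm.contE τ K c ∉ M.subterms) ∧
  (∀ ℓ, Tm.loc ℓ ∉ M.subterms)

/-- head-constructor check for membership in a fragment's (surface) syntax -/
def Tm.headOK (x : Frag) : Tm → Prop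
  | .lam τ _ => x.tyOK τ
  | .fix σ τ _ => x.tyOK (Ty.arrow σ τ)
  | .newref τ _ => x.tyOK (Ty.ref τ)
  | .callcc τ _ => x.hasCont ∧ x.tyOK (Ty.cont τ)
  | .throw τ _ _ => x.hasCont ∧ x.tyOK τ
  | .contV τ σ _ => x.hasCont ∧ x.tyOK (Ty.cont τ) ∧ x.tyOK σ
  | .contE _ _ _ => False
  | .fname _ => False
  | _ => True

/-- `M` is built from the (surface) syntax of fragment `x` -/
def Tm.inFrag (x : Frag) (M : Tm) : Prop := ∀ N ∈ M.subterms, N.headOK x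

/-- head-constructor check for the name-extended syntax of a fragment -/
def Tm.headOKX (x : Frag) : Tm → Prop
  | .lam τ _ => x.tyOK τ
  | .fix σ τ _ => x.tyOK (Ty.arrow σ τ)
  | .newref τ _ => x.tyOK (Ty.ref τ)
  | .callcc τ _ => x.hasCont ∧ x.tyOK (Ty.cont τ)
  | .throw τ _ _ => x.hasCont ∧ x.tyOK τ
  | .contV τ σ _ => x.hasCont ∧ x.tyOK (Ty.cont τ) ∧ x.tyOK σ
  | .contE τ _ c => x.hasCont ∧ x.tyOK (Ty.cont τ) ∧ x.tyOK c.ty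
  | .fname f => x.tyOK (Ty.arrow f.dom f.cod)
  | _ => True

/-- `M` is built from the name-extended syntax of fragment `x` -/
def Tm.inFragX (x : Frag) (M : Tm) : Prop := ∀ N ∈ M.subterms, N.headOKX x

/-! ## Evaluation contexts -/

inductive IsECtx : Tm → Prop
  | hole : IsECtx .hole
  | pairV {v K : Tm} : IsVal v → IsECtx K → IsECtx (.pair v K)
  | pairK {K M : Tm} : IsECtx K → IsECtx (.pair K M)
  | fst {K : Tm} : IsECtx K → IsECtx (.fst K)
  | snd {K : Tm} : IsECtx K → IsECtx (.snd K)
  | appV {v K : Tm} : IsVal v → IsECtx K → IsECtx (.app v K)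
  | appK {K M : Tm} : IsECtx K → IsECtx (.app K M)
  | newref {τ : Ty} {K : Tm} : IsECtx K → IsECtx (.newref τ K)
  | deref {K : Tm} : IsECtx K → IsECtx (.deref K)
  | assignV {v K : Tm} : IsVal v → IsECtx K → IsECtx (.assign v K)
  | assignK {K M : Tm} : IsECtx K → IsECtx (.assign K M)
  | ifte {K M N : Tm} : IsECtx K → IsECtx (.ifte K M N)
  | arithK {op} {K M : Tm} : IsECtx K → IsECtx (.arith op K M)
  | arithV {op} {v K : Tm} : IsVal v → IsECtx K → IsECtx (.arith op v K)
  | cmpK {op} {K M : Tm} : IsECtx K → IsECtx (.cmp op K M)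
  | cmpV {op} {v K : Tm} : IsVal v → IsECtx K → IsECtx (.cmp op v K)
  | refeqK {K M : Tm} : IsECtx K → IsECtx (.refeq K M)
  | refeqV {v K : Tm} : IsVal v → IsECtx K → IsECtx (.refeq v K)
  | throwV {τ : Ty} {v K : Tm} : IsVal v → IsECtx K → IsECtx (.throw τ v K)
  | throwK {τ : Ty} {K M : Tm} : IsECtx K → IsECtx (.throw τ K M)

/-! ## Typing -/

abbrev LocTy := ℕ → Option Ty
abbrev TyCtx := List Ty

def emptyLocTy : LocTy := fun _ => none

/-- Typing judgment `Typed Σ Δ hσ M τ`: locations typed by `Σ`, de Bruijn context `Δ`,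
`hσ` is the type of the hole (if a hole is permitted). -/
inductive Typed : LocTy → TyCtx → Option Ty → Tm → Ty → Prop
  | unit : Typed St Δ hσ .unit .unit
  | tt : Typed St Δ hσ .tt .bool
  | ff : Typed St Δ hσ .ff .bool
  | int (n : ℤ) : Typed St Δ hσ (.int n) .int
  | bvar {i τ} : Δ[i]? = some τ → Typed St Δ hσ (.bvar i) τ
  | errv : Typed St Δ hσ .errv (.arrow .unit .unit)
  | loc {ℓ τ} : St ℓ = some τ → Typed St Δ hσ (.loc ℓ) (.ref τ)
  | fname (f : FName) : Typed St Δ hσ (.fname f) (.arrow f.dom f.cod)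
  | hole : Typed St Δ (some τ) .hole τ
  | pair : Typed St Δ hσ a σ → Typed St Δ hσ b τ → Typed St Δ hσ (.pair a b) (.prod σ τ)
  | fst : Typed St Δ hσ a (.prod σ τ) → Typed St Δ hσ (.fst a) σ
  | snd : Typed St Δ hσ a (.prod σ τ) → Typed St Δ hσ (.snd a) τ
  | lam : Typed St (σ :: Δ) hσ M τ → Typed St Δ hσ (.lam σ M) (.arrow σ τ)
  | fix : Typed St (σ :: Ty.arrow σ τ :: Δ) hσ M τ → Typed St Δ hσ (.fix σ τ M) (.arrow σ τ)
  | app : Typed St Δ hσ a (.arrow σ τ) → Typed St Δ hσ b σ → Typed St Δ hσ (.app a b) τ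
  | newref : Typed St Δ hσ a τ → Typed St Δ hσ (.newref τ a) (.ref τ)
  | deref : Typed St Δ hσ a (.ref τ) → Typed St Δ hσ (.deref a) τ
  | assign : Typed St Δ hσ a (.ref τ) → Typed St Δ hσ b τ → Typed St Δ hσ (.assign a b) .unit
  | ifte : Typed St Δ hσ a .bool → Typed St Δ hσ b τ → Typed St Δ hσ c τ →
      Typed St Δ hσ (.ifte a b c) τ
  | arith : Typed St Δ hσ a .int → Typed St Δ hσ b .int → Typed St Δ hσ (.arith op a b) .int
  | cmp : Typed St Δ hσ a .int → Typed St Δ hσ b .int → Typed St Δ hσ (.cmp op a b) .bool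
  | refeq : Typed St Δ hσ a (.ref τ) → Typed St Δ hσ b (.ref τ) →
      Typed St Δ hσ (.refeq a b) .bool
  | callcc : Typed St (Ty.cont τ :: Δ) hσ M τ → Typed St Δ hσ (.callcc τ M) τ
  | throw : Typed St Δ hσ a σ → Typed St Δ hσ b (.cont σ) → Typed St Δ hσ (.throw τ a b) τ
  | contV : IsECtx K → Typed St Δ (some τ) K σ → Typed St Δ hσ (.contV τ σ K) (.cont τ)
  | contE {c : CName} : IsECtx K → Typed St Δ (some τ) K c.ty →
      Typed St Δ hσ (.contE τ K c) (.cont τ)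

/-! ## Heaps and operational semantics -/

abbrev Heap := ℕ → Option Tm

def Heap.empty : Heap := fun _ => none
def Heap.upd (h : Heap) (ℓ : ℕ) (V : Tm) : Heap := fun ℓ' => if ℓ' = ℓ then some V else h ℓ'

def HeapTyped (St : LocTy) (h : Heap) : Prop :=
  ∀ ℓ τ, St ℓ = some τ → ∃ V, h ℓ = some V ∧ IsVal V ∧ Typed St [] none V τ

def Heap.inFrag (x : Frag) (h : Heap) : Prop := ∀ ℓ V, h ℓ = some V → Tm.inFrag x V
def Heap.inFragX (x : Frag) (h : Heap) : Prop := ∀ ℓ V, h ℓ = some V → Tm.inFragX x V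

def ArithOp.eval : ArithOp → ℤ → ℤ → ℤ
  | .add, m, n => m + n
  | .sub, m, n => m - n
  | .mul, m, n => m * n

def CmpOp.eval : CmpOp → ℤ → ℤ → Bool
  | .eq, m, n => decide (m = n)
  | .lt, m, n => decide (m < n)

def Tm.ofBool (b : Bool) : Tm := if b then .tt else .ff

/-- head reduction rules (the rules of Figure 2 not involving continuations) -/
inductive RedBase : Tm → Heap → Tm → Heap → Prop
  | beta {σ : Ty} {M V : Tm} {h : Heap} : IsVal V →
      RedBase (.app (.lam σ M) V) h (M.subst 0 V) h
  | fixbeta {σ τ : Ty} {M V : Tm} {h : Heap} : IsVal V →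
      RedBase (.app (.fix σ τ M) V) h ((M.subst 0 V).subst 0 (.fix σ τ M)) h
  | fst {v₁ v₂ : Tm} {h : Heap} : IsVal v₁ → IsVal v₂ → RedBase (.fst (.pair v₁ v₂)) h v₁ h
  | snd {v₁ v₂ : Tm} {h : Heap} : IsVal v₁ → IsVal v₂ → RedBase (.snd (.pair v₁ v₂)) h v₂ h
  | iftt {M N : Tm} {h : Heap} : RedBase (.ifte .tt M N) h M h
  | ifff {M N : Tm} {h : Heap} : RedBase (.ifte .ff M N) h N h
  | arith {op} {m n : ℤ} {h : Heap} :
      RedBase (.arith op (.int m) (.int n)) h (.int (op.eval m n)) h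
  | cmp {op} {m n : ℤ} {h : Heap} :
      RedBase (.cmp op (.int m) (.int n)) h (Tm.ofBool (op.eval m n)) h
  | refeq {ℓ ℓ' : ℕ} {h : Heap} :
      RedBase (.refeq (.loc ℓ) (.loc ℓ')) h (Tm.ofBool (decide (ℓ = ℓ'))) h
  | deref {ℓ : ℕ} {V : Tm} {h : Heap} : h ℓ = some V → RedBase (.deref (.loc ℓ)) h V h
  | newref {τ : Ty} {V : Tm} {ℓ : ℕ} {h : Heap} : IsVal V → h ℓ = none →
      RedBase (.newref τ V) h (.loc ℓ) (Heap.upd h ℓ V)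
  | assign {ℓ : ℕ} {V : Tm} {h : Heap} : IsVal V → h ℓ ≠ none →
      RedBase (.assign (.loc ℓ) V) h .unit (Heap.upd h ℓ V)

/-- the operational reduction (M,h) → (M',h') of HOSC (Figure 2) -/
inductive Red : Tm → Heap → Tm → Heap → Prop
  | base {K M M' : Tm} {h h' : Heap} : IsECtx K → RedBase M h M' h' →
      Red (K.fill M) h (K.fill M') h'
  | callcc {τ σ : Ty} {K M : Tm} {h : Heap} : IsECtx K →
      Red (K.fill (.callcc τ M)) h (K.fill (M.subst 0 (.contV τ σ K))) h
  | throw {τ σ σ' : Ty} {K K' V : Tm} {h : Heap} : IsECtx K → IsECtx K' → IsVal V →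
      Red (K.fill (.throw τ V (.contV σ σ' K'))) h (K'.fill V) h

def RedStar : Tm × Heap → Tm × Heap → Prop :=
  Relation.ReflTransGen (fun p q => Red p.1 p.2 q.1 q.2)

/-- (M,h) ⇓_ter -/
def TerObs (M : Tm) (h : Heap) : Prop := ∃ V h', RedStar (M, h) (V, h') ∧ IsVal V

/-- (M,h) ⇓_err : reaching K[err()] -/
def ErrObs (M : Tm) (h : Heap) : Prop :=
  ∃ K h', IsECtx K ∧ RedStar (M, h) (K.fill (.app .errv .unit), h')

/-- the extended operational semantics (M,c,h) → (M',c',h') with continuation names -/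
inductive ERed : Tm → CName → Heap → Tm → CName → Heap → Prop
  | base {K M M' : Tm} {c : CName} {h h' : Heap} : IsECtx K → RedBase M h M' h' →
      ERed (K.fill M) c h (K.fill M') c h'
  | callcc {τ : Ty} {K M : Tm} {c : CName} {h : Heap} : IsECtx K →
      ERed (K.fill (.callcc τ M)) c h (K.fill (M.subst 0 (.contE τ K c))) c h
  | throw {τ σ : Ty} {K K' V : Tm} {c c' : CName} {h : Heap} :
      IsECtx K → IsECtx K' → IsVal V →
      ERed (K.fill (.throw τ V (.contE σ K' c'))) c h (K'.fill V) c' h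

/-! ## Contextual and CIU approximation -/

inductive TKind | ter | err

def TKind.obs : TKind → Tm → Heap → Prop
  | .ter => TerObs
  | .err => ErrObs

def Tm.noErr (M : Tm) : Prop := Tm.errv ∉ M.subterms

/-- contextual approximation ≲_y^x : testing with contexts built from x-syntax,
observing y (for y = ter the context may not use the error variable). -/
def CtxApprox (x : Frag) (y : TKind) (Γ : TyCtx) (τ : Ty) (M₁ M₂ : Tm) : Prop :=
  ∀ C τ', Tm.inFrag x C → C.holeCount = 1 → (y = .ter → C.noErr) →
    (∀ N, Typed emptyLocTy Γ none N τ → Typed emptyLocTy [] none (C.fill N) τ') →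
    y.obs (C.fill M₁) Heap.empty → y.obs (C.fill M₂) Heap.empty

/-- γ is a substitution of closed values for the variables in Γ -/
def SubstTyped (St : LocTy) (γ : List Tm) (Γ : TyCtx) : Prop :=
  List.Forall₂ (fun V σ => IsVal V ∧ Typed St [] none V σ) γ Γ

/-- CIU approximation ≲_{ciu,y}^x -/
def CIU (x : Frag) (y : TKind) (Γ : TyCtx) (τ : Ty) (M₁ M₂ : Tm) : Prop :=
  ∀ St h K γ τ',
    HeapTyped St h → Heap.inFrag x h → (y = .ter → ∀ ℓ V, h ℓ = some V → Tm.noErr V) →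
    IsECtx K → Tm.inFrag x K → (y = .ter → K.noErr) → Typed St [] (some τ) K τ' →
    SubstTyped St γ Γ → (∀ V ∈ γ, Tm.inFrag x V) → (y = .ter → ∀ V ∈ γ, Tm.noErr V) →
    y.obs (K.fill (M₁.msubst γ)) h → y.obs (K.fill (M₂.msubst γ)) h

/-- cr-free terms -/
structure CrFreeTm (Γ : TyCtx) (M : Tm) (τ : Ty) : Prop where
  typed : Typed emptyLocTy Γ none M τ
  synt : M.crFreeSyn
  noName : ∀ f, Tm.fname f ∉ M.subterms
  noErrv : M.noErr
  bndΓ : ∀ σ ∈ Γ, σ.crFree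
  bndτ : τ.crFree

/-! ## Abstract values, actions, traces -/

inductive AVal
  | unit | tt | ff
  | int : ℤ → AVal
  | fn : FName → AVal
  | pair : AVal → AVal → AVal

def AVal.toTm : AVal → Tm
  | .unit => .unit
  | .tt => .tt
  | .ff => .ff
  | .int n => .int n
  | .fn f => .fname f
  | .pair a b => .pair a.toTm b.toTm

def AVal.names : AVal → Set Name
  | .fn f => {Name.fn f}
  | .pair a b => a.names ∪ b.names
  | _ => ∅

/-- each name occurs at most once -/
def AVal.linear : AVal → Prop
  | .pair a b => a.linear ∧ b.linear ∧ a.names ∩ b.names = ∅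
  | _ => True

inductive AVal.HasTy : AVal → Ty → Prop
  | unit : AVal.HasTy .unit .unit
  | tt : AVal.HasTy .tt .bool
  | ff : AVal.HasTy .ff .bool
  | int (n : ℤ) : AVal.HasTy (.int n) .int
  | fn (f : FName) : AVal.HasTy (.fn f) (.arrow f.dom f.cod)
  | pair {a b σ τ} : AVal.HasTy a σ → AVal.HasTy b τ → AVal.HasTy (.pair a b) (.prod σ τ)

abbrev FEnv := FName → Option Tm
abbrev KEnv := CName → Option Tm
abbrev XiEnv := CName → Option (Option CName)

/-- decomposition of a closed value into an abstract value pattern and a matching -/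
inductive Decomp : Tm → Ty → AVal → FEnv → Prop
  | unit : Decomp .unit .unit .unit (fun _ => none)
  | tt : Decomp .tt .bool .tt (fun _ => none)
  | ff : Decomp .ff .bool .ff (fun _ => none)
  | int (n : ℤ) : Decomp (.int n) .int (.int n) (fun _ => none)
  | fn {V : Tm} {f : FName} : IsVal V →
      Decomp V (.arrow f.dom f.cod) (.fn f) (Function.update (fun _ => none) f (some V))
  | pair {u v : Tm} {σ τ : Ty} {A B : AVal} {ga gb : FEnv} :
      Decomp u σ A ga → Decomp v τ B gb → (∀ f, ga f = none ∨ gb f = none) →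
      Decomp (.pair u v) (.prod σ τ) (.pair A B) (fun f => (ga f) <|> (gb f))

inductive Act
  | pa : CName → AVal → Act
  | pq : FName → AVal → CName → Act
  | oa : CName → AVal → Act
  | oq : FName → AVal → CName → Act

def Act.isP : Act → Bool
  | .pa _ _ => true
  | .pq _ _ _ => true
  | .oa _ _ => false
  | .oq _ _ _ => false

def Act.dual : Act → Act
  | .pa c A => .oa c A
  | .pq f A c => .oq f A c
  | .oa c A => .pa c A
  | .oq f A c => .pq f A c

/-- names introduced by an action -/
def Act.intro : Act → Set Name
  | .pa _ A => A.names
  | .oa _ A => A.names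
  | .pq _ A c => A.names ∪ {Name.cn c}
  | .oq _ A c => A.names ∪ {Name.cn c}

/-- the name used to communicate -/
def Act.subject : Act → Name
  | .pa c _ => Name.cn c
  | .oa c _ => Name.cn c
  | .pq f _ _ => Name.fn f
  | .oq f _ _ => Name.fn f

def Act.names (a : Act) : Set Name := {a.subject} ∪ a.intro

def Act.wf : Act → Prop
  | .pa _ A => A.linear
  | .oa _ A => A.linear
  | .pq _ A c => A.linear ∧ Name.cn c ∉ A.names
  | .oq _ A c => A.linear ∧ Name.cn c ∉ A.names

def traceNames (t : List Act) : Set Name := {n | ∃ a ∈ t, n ∈ a.names}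

def introducedBefore (pol : Bool) (t : List Act) (i : ℕ) : Set Name :=
  {n | ∃ j, ∃ hj : j < t.length, j < i ∧ (t[j]'hj).isP = pol ∧ n ∈ (t[j]'hj).intro}

/-- (N_O, N_P)-traces -/
def IsTrace (NO NP : Set Name) (t : List Act) : Prop :=
  List.Chain' (fun a b => a.isP ≠ b.isP) t ∧
  (∀ a ∈ t, a.wf) ∧
  (∀ a ∈ t, a.intro ∩ (NO ∪ NP) = ∅) ∧
  (∀ i, ∀ hi : i < t.length, ∀ j, ∀ hj : j < t.length, i ≠ j →
      (t[i]'hi).intro ∩ (t[j]'hj).intro = ∅) ∧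
  (∀ i, ∀ hi : i < t.length,
      (t[i]'hi).subject ∈
        (if (t[i]'hi).isP then NO else NP) ∪ introducedBefore (!(t[i]'hi).isP) t i)

/-! ## The LTS -/

structure ACfg where
  tm : Tm
  cur : CName
  gf : FEnv
  gc : KEnv
  xi : XiEnv
  phi : Set Name
  hp : Heap
  Fm : Name → Option (Set Name)

structure PCfg where
  gf : FEnv
  gc : KEnv
  xi : XiEnv
  phi : Set Name
  hp : Heap
  Fm : Name → Option (Set Name)
  avail : Set Name
  topc : Option CName

inductive Cfg
  | act : ACfg → Cfg
  | pas : PCfg → Cfg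

def joinF (a b : FEnv) : FEnv := fun f => (a f) <|> (b f)

open Classical in
noncomputable def extendF (F : Name → Option (Set Name)) (s av : Set Name) :
    Name → Option (Set Name) :=
  fun n => if n ∈ s then some av else F n

/-- The (unified) LTS. With `vis = bra = false` this is the HOSC[HOSC] LTS;
`vis = true` adds the O-visibility restriction (GOSC[HOSC]);
`bra = true` adds the O-bracketing restriction (HOS[HOSC]); both give GOS[HOSC]. -/
inductive Step : Bool → Bool → Cfg → Option Act → Cfg → Prop
  | tau {vis bra : Bool} {M N : Tm} {c c' : CName} {gf : FEnv} {gc : KEnv} {xi : XiEnv}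
      {phi : Set Name} {h h' : Heap} {F : Name → Option (Set Name)} :
      ERed M c h N c' h' →
      Step vis bra (.act ⟨M, c, gf, gc, xi, phi, h, F⟩) none
        (.act ⟨N, c', gf, gc, xi, phi, h', F⟩)
  | pa {vis bra : Bool} {V : Tm} {c : CName} {A : AVal} {g' : FEnv} {gf : FEnv} {gc : KEnv}
      {xi : XiEnv} {phi : Set Name} {h : Heap} {F : Name → Option (Set Name)} :
      IsVal V → Decomp V c.ty A g' → A.linear → A.names ∩ phi = ∅ →
      Step vis bra (.act ⟨V, c, gf, gc, xi, phi, h, F⟩) (some (.pa c A))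
        (.pas ⟨joinF gf g', gc, xi, phi ∪ A.names, h, F,
               (F (Name.cn c)).getD ∅ ∪ A.names, Option.join (xi c)⟩)
  | pq {vis bra : Bool} {K V : Tm} {f : FName} {A : AVal} {c c' : CName} {g' : FEnv}
      {gf : FEnv} {gc : KEnv} {xi : XiEnv} {phi : Set Name} {h : Heap}
      {F : Name → Option (Set Name)} :
      IsECtx K → IsVal V → Decomp V f.dom A g' → A.linear →
      c'.ty = f.cod → (A.names ∪ {Name.cn c'}) ∩ phi = ∅ → Name.cn c' ∉ A.names →
      Step vis bra (.act ⟨K.fill (.app (.fname f) V), c, gf, gc, xi, phi, h, F⟩)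
        (some (.pq f A c'))
        (.pas ⟨joinF gf g', Function.update gc c' (some K),
               Function.update xi c' (some (some c)),
               phi ∪ A.names ∪ {Name.cn c'}, h, F,
               (F (Name.fn f)).getD ∅ ∪ A.names ∪ {Name.cn c'}, some c'⟩)
  | oa {vis bra : Bool} {K : Tm} {c c' : CName} {A : AVal} {gf : FEnv} {gc : KEnv}
      {xi : XiEnv} {phi : Set Name} {h : Heap} {F : Name → Option (Set Name)}
      {av : Set Name} {tc : Option CName} :
      AVal.HasTy A c.ty → A.linear → A.names ∩ phi = ∅ →
      gc c = some K → xi c = some (some c') →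
      (vis = true → Name.cn c ∈ av) → (bra = true → tc = some c) →
      Step vis bra (.pas ⟨gf, gc, xi, phi, h, F, av, tc⟩) (some (.oa c A))
        (.act ⟨K.fill A.toTm, c', gf, gc, xi, phi ∪ A.names, h, extendF F A.names av⟩)
  | oq {vis bra : Bool} {V : Tm} {f : FName} {A : AVal} {c : CName} {gf : FEnv} {gc : KEnv}
      {xi : XiEnv} {phi : Set Name} {h : Heap} {F : Name → Option (Set Name)}
      {av : Set Name} {tc : Option CName} :
      AVal.HasTy A f.dom → A.linear → c.ty = f.cod →
      (A.names ∪ {Name.cn c}) ∩ phi = ∅ → Name.cn c ∉ A.names →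
      gf f = some V →
      (vis = true → Name.fn f ∈ av) →
      Step vis bra (.pas ⟨gf, gc, xi, phi, h, F, av, tc⟩) (some (.oq f A c))
        (.act ⟨.app V A.toTm, c, gf, gc, Function.update xi c (some tc),
               phi ∪ A.names ∪ {Name.cn c}, h, extendF F (A.names ∪ {Name.cn c}) av⟩)

inductive Steps (vis bra : Bool) : Cfg → List Act → Cfg → Prop
  | nil {C : Cfg} : Steps vis bra C [] C
  | tau {C C' C'' : Cfg} {t : List Act} :
      Step vis bra C none C' → Steps vis bra C' t C'' → Steps vis bra C t C''
  | cons {C C' C'' : Cfg} {a : Act} {t : List Act} :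
      Step vis bra C (some a) C' → Steps vis bra C' t C'' → Steps vis bra C (a :: t) C''

def Traces (vis bra : Bool) (C : Cfg) : Set (List Act) := {t | ∃ C', Steps vis bra C t C'}

/-! ## Initial configurations and trace semantics -/

def AssignTyped (ρ : List AVal) (Γ : TyCtx) : Prop :=
  List.Forall₂ (fun A σ => AVal.HasTy A σ ∧ AVal.linear A) ρ Γ ∧
  List.Pairwise (fun A B => A.names ∩ B.names = ∅) ρ

def assignNames (ρ : List AVal) : Set Name := {n | ∃ A ∈ ρ, n ∈ A.names}

def initTm (M : Tm) (ρ : List AVal) : Tm := M.msubst (ρ.map AVal.toTm)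

def emptyF : Name → Option (Set Name) := fun _ => none

/-- C_M^{ρ,c} = ⟨M{ρ}, c, ∅, ∅, ν(ρ)∪{c}, ∅⟩ -/
def cfgInit (M : Tm) (ρ : List AVal) (c : CName) : Cfg :=
  .act ⟨initTm M ρ, c, (fun _ => none), (fun _ => none), (fun _ => none),
        assignNames ρ ∪ {Name.cn c}, Heap.empty, emptyF⟩

/-- C_{M,bra}^{ρ,c}: ξ initialized with [c ↦ ⊥] -/
def cfgInitBra (M : Tm) (ρ : List AVal) (c : CName) : Cfg :=
  .act ⟨initTm M ρ, c, (fun _ => none), (fun _ => none),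
        Function.update (fun _ => none : XiEnv) c (some none),
        assignNames ρ ∪ {Name.cn c}, Heap.empty, emptyF⟩

def TrSemHOSC (Γ : TyCtx) (τ : Ty) (M : Tm) : Set ((List AVal × CName) × List Act) :=
  {p | AssignTyped p.1.1 Γ ∧ p.1.2.ty = τ ∧ p.2 ∈ Traces false false (cfgInit M p.1.1 p.1.2)}

def TrSemGOSC (Γ : TyCtx) (τ : Ty) (M : Tm) : Set ((List AVal × CName) × List Act) :=
  {p | AssignTyped p.1.1 Γ ∧ p.1.2.ty = τ ∧ p.2 ∈ Traces true false (cfgInit M p.1.1 p.1.2)}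

def TrSemHOS (Γ : TyCtx) (τ : Ty) (M : Tm) : Set ((List AVal × CName) × List Act) :=
  {p | AssignTyped p.1.1 Γ ∧ p.1.2.ty = τ ∧ p.2 ∈ Traces false true (cfgInitBra M p.1.1 p.1.2)}

def TrSemGOS (Γ : TyCtx) (τ : Ty) (M : Tm) : Set ((List AVal × CName) × List Act) :=
  {p | AssignTyped p.1.1 Γ ∧ p.1.2.ty = τ ∧ p.2 ∈ Traces true true (cfgInitBra M p.1.1 p.1.2)}

/-! ## The ◦-translation and context configurations -/

/-- replace err by errn and each cont_τ(K) (with K : τ ⇒ σ) by cont_τ(K, ◦_σ) -/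
def Tm.toCirc : Tm → Tm
  | .errv => .fname errn
  | .contV τ σ K => .contE τ K.toCirc (tern σ)
  | .contE τ K c => .contE τ K.toCirc c
  | .pair a b => .pair a.toCirc b.toCirc
  | .fst a => .fst a.toCirc
  | .snd a => .snd a.toCirc
  | .lam τ a => .lam τ a.toCirc
  | .fix σ τ a => .fix σ τ a.toCirc
  | .app a b => .app a.toCirc b.toCirc
  | .newref τ a => .newref τ a.toCirc
  | .deref a => .deref a.toCirc
  | .assign a b => .assign a.toCirc b.toCirc
  | .ifte a b c => .ifte a.toCirc b.toCirc c.toCirc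
  | .arith op a b => .arith op a.toCirc b.toCirc
  | .cmp op a b => .cmp op a.toCirc b.toCirc
  | .refeq a b => .refeq a.toCirc b.toCirc
  | .callcc τ a => .callcc τ a.toCirc
  | .throw τ a b => .throw τ a.toCirc b.toCirc
  | t => t

def Heap.toCirc (h : Heap) : Heap := fun ℓ => (h ℓ).map Tm.toCirc

/-- (A⃗ᵢ, γ⃗ᵢ) ∈ AVal(γ)(Γ): componentwise decomposition of γ_◦ with mutually
disjoint names avoiding errn -/
def CtxDecomp (γ : List Tm) (Γ : TyCtx) (As : List AVal) (γs : List FEnv) : Prop :=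
  γ.length = Γ.length ∧ As.length = Γ.length ∧ γs.length = Γ.length ∧
  List.Forall₂ (fun (p : Tm × Ty) (q : AVal × FEnv) => Decomp p.1.toCirc p.2 q.1 q.2)
    (γ.zip Γ) (As.zip γs) ∧
  List.Pairwise (fun A B => A.names ∩ B.names = ∅) As ∧
  (∀ A ∈ As, Name.fn errn ∉ A.names) ∧
  (∀ A ∈ As, A.linear)

def stackF (γs : List FEnv) : FEnv := fun f => γs.foldr (fun ρ acc => (ρ f) <|> acc) none

/-- the context configuration C_{h,K,γ}^{γ⃗ᵢ,c} -/
def cfgCtx (h : Heap) (K : Tm) (As : List AVal) (γs : List FEnv) (c : CName) (τ' : Ty) : Cfg :=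
  .pas ⟨stackF γs,
        Function.update (fun _ => none : KEnv) c (some K.toCirc),
        Function.update (fun _ => none : XiEnv) c (some (some (tern τ'))),
        {n | ∃ A ∈ As, n ∈ A.names} ∪ {Name.cn c} ∪ circNames ∪ {Name.fn errn},
        Heap.toCirc h, emptyF, Set.univ, none⟩

/-- the passive configuration of the definability lemmas:
⟨γ_◦ · [c ↦ K_◦], {c ↦ tern_{τ'}}, φ ⊎ {c} ⊎ ◦ ⊎ {errn}, h_◦⟩ -/
def cfgDef (h : Heap) (K : Tm) (γ : FEnv) (c : CName) (τ' : Ty) (φ : Set Name) : Cfg :=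
  .pas ⟨(fun f => (γ f).map Tm.toCirc),
        Function.update (fun _ => none : KEnv) c (some K.toCirc),
        Function.update (fun _ => none : XiEnv) c (some (some (tern τ'))),
        φ ∪ {Name.cn c} ∪ circNames ∪ {Name.fn errn},
        Heap.toCirc h, emptyF, Set.univ, none⟩

/-! ## Name permutations -/

structure NPerm where
  pf : Equiv.Perm FName
  pc : Equiv.Perm CName
  tpf : ∀ f : FName, (pf f).dom = f.dom ∧ (pf f).cod = f.cod
  tpc : ∀ c : CName, (pc c).ty = c.ty

def NPerm.name (π : NPerm) : Name → Name
  | .fn f => .fn (π.pf f)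
  | .cn c => .cn (π.pc c)

def NPerm.fixes (π : NPerm) (X : Set Name) : Prop := ∀ n ∈ X, π.name n = n

def AVal.rename (π : NPerm) : AVal → AVal
  | .fn f => .fn (π.pf f)
  | .pair a b => .pair (a.rename π) (b.rename π)
  | a => a

def Act.rename (π : NPerm) : Act → Act
  | .pa c A => .pa (π.pc c) (A.rename π)
  | .pq f A c => .pq (π.pf f) (A.rename π) (π.pc c)
  | .oa c A => .oa (π.pc c) (A.rename π)
  | .oq f A c => .oq (π.pf f) (A.rename π) (π.pc c)

/-! ## Visibility -/

/-- the set Vis_P(t) of P-visible names of an odd-length (◦⊎{errn}, φ⊎{c})-trace -/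
inductive VisP (φ : Set Name) (c : CName) : List Act → Set Name → Prop
  | ansInit (t : List Act) (A : AVal) :
      VisP φ c (t ++ [.oa c A]) ({Name.fn errn} ∪ circNames ∪ A.names)
  | ansJust {t t' : List Act} {S : Set Name} (f : FName) (A'' : AVal) (c' : CName) (A' : AVal) :
      VisP φ c t S → c' ≠ c →
      VisP φ c (t ++ [.pq f A'' c'] ++ t' ++ [.oa c' A']) (S ∪ A'.names)
  | qInit (t : List Act) (f' : FName) (A' : AVal) (c' : CName) : Name.fn f' ∈ φ →
      VisP φ c (t ++ [.oq f' A' c']) ({Name.fn errn} ∪ circNames ∪ A'.names ∪ {Name.cn c'})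
  | qJustQ {t t' : List Act} {S : Set Name} (f'' : FName) (A'' : AVal) (c'' : CName)
      (f' : FName) (A' : AVal) (c' : CName) :
      VisP φ c t S → Name.fn f' ∈ A''.names →
      VisP φ c (t ++ [.pq f'' A'' c''] ++ t' ++ [.oq f' A' c']) (S ∪ A'.names ∪ {Name.cn c'})
  | qJustA {t t' : List Act} {S : Set Name} (c'' : CName) (A'' : AVal)
      (f' : FName) (A' : AVal) (c' : CName) :
      VisP φ c t S → Name.fn f' ∈ A''.names →
      VisP φ c (t ++ [.pa c'' A''] ++ t' ++ [.oq f' A' c']) (S ∪ A'.names ∪ {Name.cn c'})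

/-- P-visibility of a (◦⊎{errn}, φ⊎{c})-trace -/
def PVisible (φ : Set Name) (c : CName) (t : List Act) : Prop :=
  (∀ pre f A d, pre ++ [Act.pq f A d] <+: t → Even (pre.length + 1) →
      ∃ S, VisP φ c pre S ∧ Name.fn f ∈ S) ∧
  (∀ pre d A, pre ++ [Act.pa d A] <+: t → Even (pre.length + 1) →
      ∃ S, VisP φ c pre S ∧ Name.cn d ∈ S)

/-- the set Vis_O(t) of O-visible names of an odd-length (φ⊎{c}, ∅)-trace -/
inductive VisO (φ : Set Name) (c : CName) : List Act → Set Name → Prop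
  | ansInit (t : List Act) (A : AVal) :
      VisO φ c (t ++ [.pa c A]) A.names
  | ansJust {t t' : List Act} {S : Set Name} (f : FName) (A'' : AVal) (c' : CName) (A' : AVal) :
      VisO φ c t S → c' ≠ c →
      VisO φ c (t ++ [.oq f A'' c'] ++ t' ++ [.pa c' A']) (S ∪ A'.names)
  | qInit (t : List Act) (f' : FName) (A' : AVal) (c' : CName) : Name.fn f' ∈ φ →
      VisO φ c (t ++ [.pq f' A' c']) (A'.names ∪ {Name.cn c'})
  | qJustQ {t t' : List Act} {S : Set Name} (f'' : FName) (A'' : AVal) (c'' : CName)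
      (f' : FName) (A' : AVal) (c' : CName) :
      VisO φ c t S → Name.fn f' ∈ A''.names →
      VisO φ c (t ++ [.oq f'' A'' c''] ++ t' ++ [.pq f' A' c']) (S ∪ A'.names ∪ {Name.cn c'})
  | qJustA {t t' : List Act} {S : Set Name} (c'' : CName) (A'' : AVal)
      (f' : FName) (A' : AVal) (c' : CName) :
      VisO φ c t S → Name.fn f' ∈ A''.names →
      VisO φ c (t ++ [.oa c'' A''] ++ t' ++ [.pq f' A' c']) (S ∪ A'.names ∪ {Name.cn c'})

/-- O-visibility of a (φ⊎{c}, ∅)-trace -/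
def OVisible (φ : Set Name) (c : CName) (t : List Act) : Prop :=
  (∀ pre f A d, pre ++ [Act.oq f A d] <+: t → Even (pre.length + 1) →
      ∃ S, VisO φ c pre S ∧ Name.fn f ∈ S) ∧
  (∀ pre d A, pre ++ [Act.oa d A] <+: t → Even (pre.length + 1) →
      ∃ S, VisO φ c pre S ∧ Name.cn d ∈ S)

/-! ## Bracketing -/

/-- top_P(t) for odd-length ({◦_{τ'},errn}, φ⊎{c})-traces -/
inductive TopP (c : CName) (τ' : Ty) : List Act → Option CName → Prop
  | ansInit (t : List Act) (A : AVal) : TopP c τ' (t ++ [.oa c A]) (some (tern τ'))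
  | ansJust {t₁ t₂ : List Act} {r : Option CName} (f : FName) (A'' : AVal) (c' : CName)
      (A' : AVal) :
      TopP c τ' t₁ r → TopP c τ' (t₁ ++ [.pq f A'' c'] ++ t₂ ++ [.oa c' A']) r
  | quest (t : List Act) (f : FName) (A' : AVal) (c' : CName) :
      TopP c τ' (t ++ [.oq f A' c']) (some c')

/-- P-bracketing: each P-answer answers the current top continuation -/
def PBracketed (c : CName) (τ' : Ty) (t : List Act) : Prop :=
  ∀ pre d A, pre ++ [Act.pa d A] <+: t → ∃ r, TopP c τ' pre r ∧ r = some d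

/-- top_O(t) for odd-length (φ⊎{c}, ∅)-traces; `none` is ⊥ -/
inductive TopO (c : CName) : List Act → Option CName → Prop
  | ansInit (t : List Act) (A : AVal) : TopO c (t ++ [.pa c A]) none
  | ansJust {t₁ t₂ : List Act} {r : Option CName} (f : FName) (A'' : AVal) (c' : CName)
      (A' : AVal) :
      TopO c t₁ r → TopO c (t₁ ++ [.oq f A'' c'] ++ t₂ ++ [.pa c' A']) r
  | quest (t : List Act) (f : FName) (A' : AVal) (c' : CName) :
      TopO c (t ++ [.pq f A' c']) (some c')

/-- O-bracketing: each O-answer answers the current top continuation -/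
def OBracketed (c : CName) (t : List Act) : Prop :=
  ∀ pre d A, pre ++ [Act.oa d A] <+: t → TopO c pre (some d)

/-- complete traces -/
def CompleteTr (c : CName) (t : List Act) : Prop :=
  Odd t.length ∧ OBracketed c t ∧ TopO c t none

/-- trace inclusion restricted to complete traces -/
def TrIncC (S₁ S₂ : Set ((List AVal × CName) × List Act)) : Prop :=
  ∀ p ∈ S₁, CompleteTr p.1.2 p.2 → p ∈ S₂

/-!
Names are computed structurally, and filling an evaluation context `K` (which contains its
hole) with `X` yields exactly the names of `K` together with those of `X`. A step inside `K`
therefore only has to avoid adding names to the redex. Substitution only recombines names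
already present; `callcc` builds `cont(K, c)` from the context and the current continuation
name; `throw` continues with parts of the thrown term. The one rule that reads from outside
the term is dereferencing, and in a GOSC heap the value read is a closed value of ground type,
which contains no names.
-/

namespace Tm

def namesRec : Tm → Set Name
  | .fname f => {Name.fn f}
  | .pair a b => a.namesRec ∪ b.namesRec
  | .fst a => a.namesRec
  | .snd a => a.namesRec
  | .lam _ a => a.namesRec
  | .fix _ _ a => a.namesRec
  | .app a b => a.namesRec ∪ b.namesRec
  | .newref _ a => a.namesRec
  | .deref a => a.namesRec
  | .assign a b => a.namesRec ∪ b.namesRec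
  | .ifte a b c => a.namesRec ∪ b.namesRec ∪ c.namesRec
  | .arith _ a b => a.namesRec ∪ b.namesRec
  | .cmp _ a b => a.namesRec ∪ b.namesRec
  | .refeq a b => a.namesRec ∪ b.namesRec
  | .callcc _ a => a.namesRec
  | .throw _ a b => a.namesRec ∪ b.namesRec
  | .contV _ _ K => K.namesRec
  | .contE _ K c => insert (Name.cn c) K.namesRec
  | _ => ∅

theorem names_eq_namesRec (M : Tm) : M.names = M.namesRec := by
  ext n
  induction M <;>
    simp_all [Tm.names, Tm.subterms, namesRec, exists_or] <;>
    aesop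

@[simp]
theorem namesRec_ofBool (b : Bool) : (Tm.ofBool b).namesRec = ∅ := by
  cases b <;> rfl

theorem namesRec_subst_subset (t : Tm) (k : ℕ) (V : Tm) :
    (t.subst k V).namesRec ⊆ t.namesRec ∪ V.namesRec := by
  induction t generalizing k with
  | bvar i =>
    simp only [Tm.subst]
    split_ifs <;> simp [namesRec]
  | _ =>
    simp only [Tm.subst, namesRec, Set.subset_def, Set.mem_union, Set.mem_insert_iff] at *
    grind

theorem namesRec_fill_subset (T X : Tm) : (T.fill X).namesRec ⊆ T.namesRec ∪ X.namesRec := by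
  induction T <;>
    simp only [Tm.fill, namesRec, Set.subset_def, Set.mem_union] at * <;>
    grind

theorem namesRec_subset_namesRec_fill (T X : Tm) : T.namesRec ⊆ (T.fill X).namesRec := by
  induction T <;>
    simp only [Tm.fill, namesRec, Set.subset_def, Set.mem_union] at * <;>
    grind

theorem namesRec_subset_namesRec_fill_of_pos {T : Tm} (hT : 0 < T.holeCount) (X : Tm) :
    X.namesRec ⊆ (T.fill X).namesRec := by
  induction T <;>
    simp only [Tm.holeCount, Tm.fill, namesRec, Set.subset_def, Set.mem_union] at * <;>
    grind

theorem namesRec_fill_of_pos {T : Tm} (hT : 0 < T.holeCount) (X : Tm) :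
    (T.fill X).namesRec = T.namesRec ∪ X.namesRec :=
  (namesRec_fill_subset T X).antisymm
    (Set.union_subset (namesRec_subset_namesRec_fill T X)
      (namesRec_subset_namesRec_fill_of_pos hT X))

theorem namesRec_eq_empty_of_ground {St : LocTy} {Δ : TyCtx} {hσ : Option Ty} {V : Tm} {τ : Ty}
    (hV : IsVal V) (hty : Typed St Δ hσ V τ) (hτ : τ.Ground) : V.namesRec = ∅ := by
  cases hty <;> first | rfl | (cases hτ; done) | cases hV

end Tm

theorem IsECtx.holeCount_pos {K : Tm} (hK : IsECtx K) : 0 < K.holeCount := by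
  induction hK <;> simp only [Tm.holeCount] <;> omega

theorem IsECtx.namesRec_fill {K : Tm} (hK : IsECtx K) (X : Tm) :
    (K.fill X).namesRec = K.namesRec ∪ X.namesRec :=
  Tm.namesRec_fill_of_pos hK.holeCount_pos X

theorem HeapTyped.namesRec_eq_empty_of_ground {St : LocTy} {h : Heap}
    (hground : ∀ ℓ τ, St ℓ = some τ → τ.Ground) (hheap : HeapTyped St h)
    (hdom : ∀ ℓ, (h ℓ).isSome = true → (St ℓ).isSome = true)
    {ℓ : ℕ} {V : Tm} (hℓ : h ℓ = some V) : V.namesRec = ∅ := by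
  obtain ⟨τ, hτ⟩ := Option.isSome_iff_exists.mp (hdom ℓ (by simp [hℓ]))
  obtain ⟨V', hV', hval, htyped⟩ := hheap ℓ τ hτ
  obtain rfl : V = V' := Option.some.inj (hℓ.symm.trans hV')
  exact Tm.namesRec_eq_empty_of_ground hval htyped (hground ℓ τ hτ)

theorem RedBase.namesRec_subset {M M' : Tm} {h h' : Heap} (hred : RedBase M h M' h')
    (hnameless : ∀ ℓ V, h ℓ = some V → V.namesRec = ∅) : M'.namesRec ⊆ M.namesRec := by
  cases hred with
  | beta => exact Tm.namesRec_subst_subset _ _ _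
  | @fixbeta σ τ N V =>
    have hN := Tm.namesRec_subst_subset N 0 V
    have hfix := Tm.namesRec_subst_subset (N.subst 0 V) 0 (.fix σ τ N)
    simp only [Tm.namesRec, Set.subset_def, Set.mem_union] at *
    grind
  | fst => exact Set.subset_union_left
  | snd => exact Set.subset_union_right
  | iftt => simp only [Tm.namesRec, Set.empty_union]; exact Set.subset_union_left
  | ifff => exact Set.subset_union_right
  | deref hℓ => simp [hnameless _ _ hℓ]
  | _ => simp [Tm.namesRec]

theorem gosc_reduction_names_general
    (M M' : Tm) (c c' : CName) (h h' : Heap)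
    (hty : ∃ St : LocTy, (∀ ℓ τ, St ℓ = some τ → Ty.Ground τ) ∧ HeapTyped St h ∧
            ∀ ℓ, (h ℓ).isSome = true → (St ℓ).isSome = true)
    (st : ERed M c h M' c' h') :
    M'.names ∪ {Name.cn c'} ⊆ M.names ∪ {Name.cn c} := by
  obtain ⟨St, hground, hheap, hdom⟩ := hty
  rw [Tm.names_eq_namesRec, Tm.names_eq_namesRec]
  cases st with
  | base hK hred =>
    rw [hK.namesRec_fill, hK.namesRec_fill]
    have hredex := hred.namesRec_subset fun _ _ =>
      hheap.namesRec_eq_empty_of_ground hground hdom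
    gcongr
  | @callcc τ K N _ _ hK =>
    have hsubst := Tm.namesRec_subst_subset N 0 (.contE τ K c)
    rw [hK.namesRec_fill, hK.namesRec_fill]
    simp only [Tm.namesRec, Set.subset_def, Set.union_singleton, Set.mem_union,
      Set.mem_insert_iff] at *
    grind
  | throw hK hK' _ =>
    rw [hK.namesRec_fill, hK'.namesRec_fill]
    simp only [Tm.namesRec, Set.subset_def, Set.union_singleton, Set.mem_union,
      Set.mem_insert_iff]
    grind

/-- GOSC internal reductions never introduce new names: if
(M,c,h) → (M',c',h') in the extended semantics with M a GOSC term and h a GOSC heap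
(storing only ground-type values), then ν(M') ∪ {c'} ⊆ ν(M) ∪ {c}. -/
theorem gosc_reduction_names
    (M M' : Tm) (c c' : CName) (h h' : Heap)
    (hM : Tm.inFragX Frag.GOSC M)
    (hhf : Heap.inFragX Frag.GOSC h)
    (hty : ∃ St : LocTy, (∀ ℓ τ, St ℓ = some τ → Ty.Ground τ) ∧ HeapTyped St h ∧
            ∀ ℓ, (h ℓ).isSome = true → (St ℓ).isSome = true)
    (st : ERed M c h M' c' h') :
    M'.names ∪ {Name.cn c'} ⊆ M.names ∪ {Name.cn c} :=
  gosc_reduction_names_general M M' c c' h h' hty st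

end OGS
end

section
/- For every cr-free HOSC term Γ ⊢ M : τ, Γ-assignment ρ and continuation name c : τ: t ∈ Tr_GOSC(C_{M,vis}^{ρ,c}) if and only if t ∈ Tr_HOSC(C_M^{ρ,c}) and t is O-visible. -/
/-!
The two LTSs differ only in the side condition of O-moves, which asks the
subject to lie in the set `avail` of the passive configuration. Along every run from
`C_M^{ρ,c}` this set is exactly `Vis_O` of the trace played so far. Indeed, P only ever
mentions names that are initial or were introduced by O (a cr-free `M` contributes no names
of its own, and reduction creates none), so every name P calls or answers on is justified
by an O-move or is initial, and the map `F` stores for each O-introduced name the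
O-visible names at its introduction, which is what the justification clauses of `Vis_O`
look up. Since each name is introduced only once, `Vis_O(t)` is uniquely determined, so the
side condition holds along a run exactly when its trace is O-visible.
-/

set_option maxHeartbeats 1000000
set_option autoImplicit true

namespace OGS

/-- The names `ν(M)` of `Tm.names`, computed by structural recursion. -/
def Tm.occNames : Tm → Set Name
  | .fname f => {Name.fn f}
  | .pair a b => a.occNames ∪ b.occNames
  | .fst a => a.occNames
  | .snd a => a.occNames
  | .lam _ a => a.occNames
  | .fix _ _ a => a.occNames
  | .app a b => a.occNames ∪ b.occNames
  | .newref _ a => a.occNames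
  | .deref a => a.occNames
  | .assign a b => a.occNames ∪ b.occNames
  | .ifte a b c => a.occNames ∪ b.occNames ∪ c.occNames
  | .arith _ a b => a.occNames ∪ b.occNames
  | .cmp _ a b => a.occNames ∪ b.occNames
  | .refeq a b => a.occNames ∪ b.occNames
  | .callcc _ a => a.occNames
  | .throw _ a b => a.occNames ∪ b.occNames
  | .contV _ _ K => K.occNames
  | .contE _ K c => K.occNames ∪ {Name.cn c}
  | _ => ∅

namespace Tm

theorem occNames_subst (M : Tm) (k : ℕ) (V : Tm) :
    (M.subst k V).occNames ⊆ M.occNames ∪ V.occNames := by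
  induction M generalizing k with
  | bvar i =>
    simp only [subst]
    split_ifs <;> simp [occNames]
  | _ =>
    simp only [subst, occNames, Set.subset_def, Set.mem_union] at *
    grind

theorem occNames_fill (C M : Tm) : (C.fill M).occNames ⊆ C.occNames ∪ M.occNames := by
  induction C <;> simp only [fill, occNames, Set.subset_def, Set.mem_union] at * <;> grind

theorem occNames_subset_fill (C M : Tm) : C.occNames ⊆ (C.fill M).occNames := by
  induction C <;> simp only [fill, occNames, Set.subset_def, Set.mem_union] at * <;> grind

theorem occNames_subset_fill_of_isECtx {K : Tm} (hK : IsECtx K) (M : Tm) :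
    M.occNames ⊆ (K.fill M).occNames := by
  induction hK <;> simp only [fill, occNames, Set.subset_def, Set.mem_union] at * <;> grind

theorem occNames_msubst (γ : List Tm) (M : Tm) :
    (M.msubst γ).occNames ⊆ M.occNames ∪ {n | ∃ V ∈ γ, n ∈ V.occNames} := by
  induction γ generalizing M with
  | nil => simp [msubst]
  | cons V γ ih =>
    intro n hn
    rcases ih (M.subst 0 V) hn with h | ⟨W, hW, hn⟩
    · rcases occNames_subst M 0 V h with h | h
      · exact Or.inl h
      · exact Or.inr ⟨V, List.mem_cons_self, h⟩
    · exact Or.inr ⟨W, List.mem_cons_of_mem V hW, hn⟩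

theorem occNames_eq_empty {M : Tm} (hf : ∀ f, Tm.fname f ∉ M.subterms)
    (hc : ∀ τ K c, Tm.contE τ K c ∉ M.subterms) : M.occNames = ∅ := by
  induction M with
  | contE τ K c => exact absurd List.mem_cons_self (hc τ K c)
  | _ => simp_all [subterms, occNames]

end Tm

theorem AVal.occNames_toTm (A : AVal) : A.toTm.occNames = A.names := by
  induction A <;> simp_all [AVal.toTm, Tm.occNames, AVal.names]

def StoredNamesIn {α : Type} (g : α → Option Tm) (S : Set Name) : Prop :=
  ∀ a V, g a = some V → V.occNames ⊆ S

theorem StoredNamesIn.upd {h : Heap} {S : Set Name} {V : Tm} (hh : StoredNamesIn h S)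
    (hV : V.occNames ⊆ S) (ℓ : ℕ) : StoredNamesIn (h.upd ℓ V) S := by
  intro ℓ' W hW
  unfold Heap.upd at hW
  split_ifs at hW
  · cases hW; exact hV
  · exact hh _ _ hW

theorem RedBase.occNames_subset {M M' : Tm} {h h' : Heap} {S : Set Name}
    (hr : RedBase M h M' h') (hM : M.occNames ⊆ S) (hh : StoredNamesIn h S) :
    M'.occNames ⊆ S ∧ StoredNamesIn h' S := by
  cases hr with
  | deref hℓ => exact ⟨hh _ _ hℓ, hh⟩
  | beta =>
    simp only [Tm.occNames, Set.union_subset_iff] at hM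
    exact ⟨(Tm.occNames_subst _ _ _).trans (Set.union_subset hM.1 hM.2), hh⟩
  | fixbeta =>
    simp only [Tm.occNames, Set.union_subset_iff] at hM
    have hbody := (Tm.occNames_subst _ 0 _).trans (Set.union_subset hM.1 hM.2)
    exact ⟨(Tm.occNames_subst _ 0 _).trans (Set.union_subset hbody hM.1), hh⟩
  | newref | assign =>
    simp only [Tm.occNames, Set.union_subset_iff] at hM
    exact ⟨Set.empty_subset S, hh.upd (by simp_all) _⟩
  | _ => simp_all [Tm.occNames, Tm.ofBool, apply_ite Tm.occNames]

theorem ERed.occNames_subset {M N : Tm} {c c' : CName} {h h' : Heap} {S : Set Name}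
    (hr : ERed M c h N c' h') (hM : M.occNames ⊆ S) (hh : StoredNamesIn h S)
    (hc : Name.cn c ∈ S) : N.occNames ⊆ S ∧ StoredNamesIn h' S ∧ Name.cn c' ∈ S := by
  cases hr with
  | @base K M₀ M₀' _ _ _ hK hb =>
    have hKS : K.occNames ⊆ S := (Tm.occNames_subset_fill K M₀).trans hM
    have hM₀ : M₀.occNames ⊆ S := (Tm.occNames_subset_fill_of_isECtx hK M₀).trans hM
    obtain ⟨hM₀', hh'⟩ := hb.occNames_subset hM₀ hh
    exact ⟨(Tm.occNames_fill K M₀').trans (Set.union_subset hKS hM₀'), hh', hc⟩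
  | @callcc τ K M₀ _ _ hK =>
    have hKS : K.occNames ⊆ S := (Tm.occNames_subset_fill K _).trans hM
    have hM₀ : M₀.occNames ⊆ S :=
      (Tm.occNames_subset_fill_of_isECtx hK (.callcc τ M₀)).trans hM
    refine ⟨(Tm.occNames_fill K _).trans (Set.union_subset hKS ?_), hh, hc⟩
    refine (Tm.occNames_subst M₀ 0 _).trans (Set.union_subset hM₀ ?_)
    exact Set.union_subset hKS (Set.singleton_subset_iff.2 hc)
  | @throw τ σ K K' V _ _ _ hK _ _ =>
    have hthrow := (Tm.occNames_subset_fill_of_isECtx hK _).trans hM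
    simp only [Tm.occNames, Set.union_subset_iff, Set.singleton_subset_iff] at hthrow
    obtain ⟨hV, hK', hc'⟩ := hthrow
    exact ⟨(Tm.occNames_fill K' V).trans (Set.union_subset hK' hV), hh, hc'⟩

theorem Decomp.storedNamesIn {V : Tm} {τ : Ty} {A : AVal} {g : FEnv} (hd : Decomp V τ A g) :
    StoredNamesIn g V.occNames := by
  induction hd with
  | fn =>
    intro f W hW
    rw [Function.update_apply] at hW
    split_ifs at hW
    cases hW
    exact subset_rfl
  | @pair u v _ _ _ _ ga gb _ _ _ iha ihb =>
    intro f W hW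
    cases hga : ga f with
    | some U =>
      simp only [hga] at hW
      exact (iha f _ (hW ▸ hga)).trans Set.subset_union_left
    | none =>
      simp only [hga] at hW
      exact (ihb f W hW).trans Set.subset_union_right
  | _ => intro f W hW; cases hW

theorem AVal.cn_not_mem_names (A : AVal) (d : CName) : Name.cn d ∉ A.names := by
  induction A <;> simp_all [AVal.names]

theorem prefix_eq_of_pairwise_disjoint {α β : Type} {f : α → Set β} {l₁ l₂ r₁ r₂ : List α}
    {a b : α} {x : β} (hp : (l₁ ++ a :: l₂).Pairwise (Function.onFun Disjoint f))
    (he : l₁ ++ a :: l₂ = r₁ ++ b :: r₂) (ha : x ∈ f a) (hb : x ∈ f b) : l₁ = r₁ := by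
  rcases List.append_eq_append_iff.1 he with ⟨m, rfl, hm⟩ | ⟨m, rfl, hm⟩
  · cases m with
    | nil => simp
    | cons y m =>
      obtain ⟨rfl, -⟩ := List.cons_eq_cons.1 hm
      rw [he] at hp
      exact absurd (hp.rel_of_mem_append (by simp) List.mem_cons_self)
        (Set.not_disjoint_iff.2 ⟨x, ha, hb⟩)
  · cases m with
    | nil => simp
    | cons y m =>
      obtain ⟨rfl, -⟩ := List.cons_eq_cons.1 hm
      exact absurd (hp.rel_of_mem_append (by simp) List.mem_cons_self)
        (Set.not_disjoint_iff.2 ⟨x, hb, ha⟩)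

def introNames (t : List Act) : Set Name := {n | ∃ a ∈ t, n ∈ a.intro}

def oIntroNames (t : List Act) : Set Name := {n | ∃ a ∈ t, a.isP = false ∧ n ∈ a.intro}

/-- The names P can mention after `t`: the initial ones and those introduced by O. -/
def oNames (φ : Set Name) (c : CName) (t : List Act) : Set Name :=
  φ ∪ {Name.cn c} ∪ oIntroNames t

def FreshTr (φ : Set Name) (c : CName) (t : List Act) : Prop :=
  (∀ a ∈ t, Disjoint a.intro (φ ∪ {Name.cn c})) ∧
    t.Pairwise (Function.onFun Disjoint Act.intro)

theorem introNames_append_singleton (t : List Act) (a : Act) :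
    introNames (t ++ [a]) = introNames t ∪ a.intro := by
  ext n; simp [introNames]

theorem oIntroNames_append_singleton_of_isP {t : List Act} {a : Act} (ha : a.isP = true) :
    oIntroNames (t ++ [a]) = oIntroNames t := by
  ext n; simp [oIntroNames, ha]

theorem oIntroNames_append_singleton_of_not_isP {t : List Act} {a : Act} (ha : a.isP = false) :
    oIntroNames (t ++ [a]) = oIntroNames t ∪ a.intro := by
  ext n; simp [oIntroNames, ha]

theorem oNames_append_singleton_of_isP (φ : Set Name) (c : CName) {t : List Act} {a : Act}
    (ha : a.isP = true) : oNames φ c (t ++ [a]) = oNames φ c t := by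
  rw [oNames, oNames, oIntroNames_append_singleton_of_isP ha]

theorem oNames_append_singleton_of_not_isP (φ : Set Name) (c : CName) {t : List Act} {a : Act}
    (ha : a.isP = false) : oNames φ c (t ++ [a]) = oNames φ c t ∪ a.intro := by
  rw [oNames, oNames, oIntroNames_append_singleton_of_not_isP ha, ← Set.union_assoc]

theorem oNames_mono (φ : Set Name) (c : CName) (t u : List Act) :
    oNames φ c t ⊆ oNames φ c (t ++ u) := by
  rintro n (h | ⟨a, ha, h⟩)
  · exact Or.inl h
  · exact Or.inr ⟨a, List.mem_append_left u ha, h⟩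

namespace FreshTr

variable {φ : Set Name} {c : CName}

theorem nil : FreshTr φ c [] := ⟨by simp, List.Pairwise.nil⟩

theorem append_singleton {t : List Act} {a : Act} (ht : FreshTr φ c t)
    (ha : a.intro ∩ (φ ∪ {Name.cn c} ∪ introNames t) = ∅) : FreshTr φ c (t ++ [a]) := by
  rw [← Set.disjoint_iff_inter_eq_empty, Set.disjoint_union_right] at ha
  refine ⟨?_, List.pairwise_append.2 ⟨ht.2, List.pairwise_singleton _ _, ?_⟩⟩
  · intro b hb
    rcases List.mem_append.1 hb with hb | hb
    · exact ht.1 b hb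
    · rw [List.mem_singleton.1 hb]; exact ha.1
  · rintro b hb a' ha'
    obtain rfl := List.mem_singleton.1 ha'
    exact Set.disjoint_left.2 fun n hnb hna => Set.disjoint_left.1 ha.2 hna ⟨b, hb, hnb⟩

theorem of_append {t u : List Act} (ht : FreshTr φ c (t ++ u)) : FreshTr φ c t :=
  ⟨fun a ha => ht.1 a (List.mem_append_left u ha), (List.pairwise_append.1 ht.2).1⟩

theorem not_mem_oIntroNames {t : List Act} (ht : FreshTr φ c t) {n : Name}
    (hn : n ∈ φ ∪ {Name.cn c}) : n ∉ oIntroNames t :=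
  fun ⟨a, ha, _, hna⟩ => Set.disjoint_left.1 (ht.1 a ha) hna hn

end FreshTr

namespace VisO

variable {φ : Set Name} {c : CName}

/-- The five clauses of `VisO`, sorted by whether the subject of the last action is an initial
name or is justified by an earlier O-action `b`. -/
theorem inversion {t : List Act} {S : Set Name} (h : VisO φ c t S) :
    ∃ t₀ a, t = t₀ ++ [a] ∧
      ((a.subject ∈ φ ∪ {Name.cn c} ∧ S = a.intro) ∨
        ∃ t₁ b t₂ S₀, t₀ = t₁ ++ b :: t₂ ∧ a.subject ∈ b.intro ∧ VisO φ c t₁ S₀ ∧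
          S = S₀ ∪ a.intro) := by
  cases h with
  | ansInit t A => exact ⟨t, _, rfl, Or.inl ⟨Or.inr rfl, rfl⟩⟩
  | @ansJust t t' S₀ f A'' c' A' hv _ =>
    exact ⟨_, _, rfl, Or.inr ⟨t, .oq f A'' c', t', S₀, by simp, Or.inr rfl, hv, rfl⟩⟩
  | qInit t f' A' c' hf => exact ⟨t, _, rfl, Or.inl ⟨Or.inl hf, rfl⟩⟩
  | @qJustQ t t' S₀ f'' A'' c'' f' A' c' hv hf =>
    exact ⟨_, _, rfl, Or.inr ⟨t, .oq f'' A'' c'', t', S₀, by simp, Or.inl hf, hv,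
      Set.union_assoc _ _ _⟩⟩
  | @qJustA t t' S₀ c'' A'' f' A' c' hv hf =>
    exact ⟨_, _, rfl, Or.inr ⟨t, .oa c'' A'', t', S₀, by simp, hf, hv, Set.union_assoc _ _ _⟩⟩

theorem unique {t : List Act} (ht : FreshTr φ c t) {S₁ S₂ : Set Name}
    (h₁ : VisO φ c t S₁) (h₂ : VisO φ c t S₂) : S₁ = S₂ := by
  obtain ⟨t₀, a, rfl, hS₁⟩ := h₁.inversion
  obtain ⟨u₀, b, he, hS₂⟩ := h₂.inversion
  obtain ⟨rfl, hab⟩ := List.append_inj' he rfl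
  obtain rfl : a = b := by simpa using hab
  have no_init_justifier : ∀ t₁ b t₂, t₀ = t₁ ++ b :: t₂ → a.subject ∈ b.intro →
      a.subject ∉ φ ∪ {Name.cn c} := by
    rintro t₁ b t₂ rfl hb hinit
    exact Set.disjoint_left.1 (ht.1 b (by simp)) hb hinit
  rcases hS₁ with ⟨hinit, rfl⟩ | ⟨t₁, b₁, t₂, S₀, rfl, hb₁, hv₁, rfl⟩ <;>
    rcases hS₂ with ⟨hinit', rfl⟩ | ⟨u₁, b₂, u₂, T₀, he', hb₂, hv₂, rfl⟩
  · rfl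
  · exact absurd hinit (no_init_justifier _ _ _ he' hb₂)
  · exact absurd hinit' (no_init_justifier _ _ _ rfl hb₁)
  · -- a name is introduced only once, so both justifiers are the same O-action
    have hpre := ht.of_append
    obtain rfl := prefix_eq_of_pairwise_disjoint hpre.2 he' hb₁ hb₂
    rw [unique (hpre.of_append (u := b₁ :: t₂)) hv₁ hv₂]
termination_by t.length
decreasing_by subst_vars; simp only [List.length_append, List.length_cons]; omega

end VisO

def RecordsVisO (φ : Set Name) (c : CName) (t : List Act) (F : Name → Option (Set Name)) :
    Prop :=
  (∀ n ∉ oIntroNames t, F n = none) ∧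
    ∀ n ∈ oIntroNames t, ∃ t₁ b t₂ S, t = t₁ ++ b :: t₂ ∧ b.isP = false ∧ n ∈ b.intro ∧
      VisO φ c t₁ S ∧ F n = some S

namespace RecordsVisO

variable {φ : Set Name} {c : CName} {t : List Act} {F : Name → Option (Set Name)}

theorem nil : RecordsVisO φ c [] emptyF :=
  ⟨fun _ _ => rfl, fun _ ⟨_, ha, _⟩ => absurd ha List.not_mem_nil⟩

theorem append_singleton_of_isP {a : Act} (ha : a.isP = true) (hF : RecordsVisO φ c t F) :
    RecordsVisO φ c (t ++ [a]) F := by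
  rw [RecordsVisO, oIntroNames_append_singleton_of_isP ha]
  refine ⟨hF.1, fun n hn => ?_⟩
  obtain ⟨t₁, b, t₂, S, rfl, hb⟩ := hF.2 n hn
  exact ⟨t₁, b, t₂ ++ [a], S, by simp, hb⟩

theorem append_singleton_of_not_isP {a : Act} {av : Set Name} (ha : a.isP = false)
    (hF : RecordsVisO φ c t F) (hav : VisO φ c t av) :
    RecordsVisO φ c (t ++ [a]) (extendF F a.intro av) := by
  rw [RecordsVisO, oIntroNames_append_singleton_of_not_isP ha]
  refine ⟨fun n hn => ?_, fun n hn => ?_⟩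
  · rw [Set.mem_union, not_or] at hn
    simp [extendF, hn.2, hF.1 n hn.1]
  · by_cases hna : n ∈ a.intro
    · exact ⟨t, a, [], av, rfl, ha, hna, hav, by simp [extendF, hna]⟩
    · obtain ⟨t₁, b, t₂, S, rfl, hb, hnb, hS, hFn⟩ := hF.2 n (hn.resolve_right hna)
      exact ⟨t₁, b, t₂ ++ [a], S, by simp, hb, hnb, hS, by simp [extendF, hna, hFn]⟩

end RecordsVisO

namespace VisO

variable {φ : Set Name} {c : CName} {t : List Act} {F : Name → Option (Set Name)}

theorem append_pa (hφ : ∀ d, Name.cn d ∉ φ) (ht : FreshTr φ c t) (hF : RecordsVisO φ c t F)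
    {d : CName} (hd : Name.cn d ∈ oNames φ c t) (A : AVal) :
    VisO φ c (t ++ [.pa d A]) ((F (Name.cn d)).getD ∅ ∪ A.names) := by
  rcases hd with (hd | hd) | hd
  · exact absurd hd (hφ d)
  · obtain rfl : d = c := Name.cn.inj hd
    rw [hF.1 _ (ht.not_mem_oIntroNames (Or.inr rfl)), Option.getD_none, Set.empty_union]
    exact ansInit t A
  · obtain ⟨t₁, b, t₂, S, rfl, hb, hdb, hS, hFd⟩ := hF.2 _ hd
    have hdc : d ≠ c := by
      rintro rfl
      exact ht.not_mem_oIntroNames (Or.inr rfl) hd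
    cases b with
    | oq f A'' d' =>
      obtain rfl : d = d' := by simpa [Act.intro, AVal.cn_not_mem_names] using hdb
      rw [hFd, Option.getD_some]
      simpa using ansJust (t' := t₂) f A'' d A hS hdc
    | oa d' A'' => exact absurd hdb (AVal.cn_not_mem_names A'' d)
    | pa | pq => cases hb

theorem append_pq (ht : FreshTr φ c t) (hF : RecordsVisO φ c t F) {f : FName}
    (hf : Name.fn f ∈ oNames φ c t) (A : AVal) (c' : CName) :
    VisO φ c (t ++ [.pq f A c']) ((F (Name.fn f)).getD ∅ ∪ A.names ∪ {Name.cn c'}) := by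
  rcases hf with (hf | hf) | hf
  · rw [hF.1 _ (ht.not_mem_oIntroNames (Or.inl hf)), Option.getD_none, Set.empty_union]
    exact qInit t f A c' hf
  · cases hf
  · obtain ⟨t₁, b, t₂, S, rfl, hb, hfb, hS, hFf⟩ := hF.2 _ hf
    rw [hFf, Option.getD_some]
    cases b with
    | oq f'' A'' c'' =>
      have hfA : Name.fn f ∈ A''.names := by simpa [Act.intro] using hfb
      simpa using qJustQ (t' := t₂) f'' A'' c'' f A c' hS hfA
    | oa c'' A'' => simpa using qJustA (t' := t₂) c'' A'' f A c' hS hfb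
    | pa | pq => cases hb

end VisO

theorem StoredNamesIn.mono {α : Type} {g : α → Option Tm} {S T : Set Name}
    (hg : StoredNamesIn g S) (hST : S ⊆ T) : StoredNamesIn g T :=
  fun a V hV => (hg a V hV).trans hST

theorem StoredNamesIn.joinF {g g' : FEnv} {S : Set Name} (hg : StoredNamesIn g S)
    (hg' : StoredNamesIn g' S) : StoredNamesIn (joinF g g') S := by
  intro f V hV
  cases hgf : g f with
  | some U => simp only [OGS.joinF, hgf] at hV; exact hg f _ (hV ▸ hgf)
  | none => simp only [OGS.joinF, hgf] at hV; exact hg' f V hV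

structure StoreInv (φ : Set Name) (c : CName) (t : List Act) (gf : FEnv) (gc : KEnv)
    (xi : XiEnv) (phi : Set Name) (hp : Heap) (F : Name → Option (Set Name)) : Prop where
  phi_eq : phi = φ ∪ {Name.cn c} ∪ introNames t
  fresh : FreshTr φ c t
  heap : StoredNamesIn hp (oNames φ c t)
  funs : StoredNamesIn gf (oNames φ c t)
  conts : StoredNamesIn gc (oNames φ c t)
  conts_dom : ∀ d K, gc d = some K → Name.cn d ∈ phi
  -- only where O can answer: an O-introduced continuation may return to a P-introduced one
  xi : ∀ d K c', gc d = some K → xi d = some (some c') → Name.cn c' ∈ oNames φ c t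
  records : RecordsVisO φ c t F

namespace StoreInv

variable {φ : Set Name} {c : CName} {t : List Act} {gf : FEnv} {gc : KEnv} {xi : XiEnv}
  {phi : Set Name} {hp : Heap} {F : Name → Option (Set Name)} {a : Act}

theorem append_singleton_of_isP (hI : StoreInv φ c t gf gc xi phi hp F) (ha : a.isP = true)
    (hfresh : a.intro ∩ phi = ∅) {g : FEnv} (hg : StoredNamesIn g (oNames φ c t)) :
    StoreInv φ c (t ++ [a]) (joinF gf g) gc xi (phi ∪ a.intro) hp F := by
  have hS := oNames_append_singleton_of_isP φ c (t := t) ha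
  refine ⟨?_, hI.fresh.append_singleton (hI.phi_eq ▸ hfresh), hS ▸ hI.heap,
    hS ▸ hI.funs.joinF hg, hS ▸ hI.conts, fun d K hK => Or.inl (hI.conts_dom d K hK),
    hS ▸ hI.xi, hI.records.append_singleton_of_isP ha⟩
  rw [hI.phi_eq, introNames_append_singleton, Set.union_assoc]

theorem pushCont (hI : StoreInv φ c t gf gc xi phi hp F) {d c₀ : CName} {K : Tm}
    (hd : Name.cn d ∈ phi) (hK : K.occNames ⊆ oNames φ c t) (hc₀ : Name.cn c₀ ∈ oNames φ c t) :
    StoreInv φ c t gf (Function.update gc d (some K)) (Function.update xi d (some (some c₀)))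
      phi hp F := by
  refine { hI with conts := fun d' K' hK' => ?_, conts_dom := fun d' K' hK' => ?_,
                   xi := fun d' K' c' hK' hxi => ?_ } <;>
    rcases eq_or_ne d' d with rfl | hne
  · obtain rfl : K = K' := by simpa using hK'
    exact hK
  · exact hI.conts d' K' (by simpa [hne] using hK')
  · exact hd
  · exact hI.conts_dom d' K' (by simpa [hne] using hK')
  · obtain rfl : c₀ = c' := by simpa using hxi
    exact hc₀
  · exact hI.xi d' K' c' (by simpa [hne] using hK') (by simpa [hne] using hxi)

theorem updateXi (hI : StoreInv φ c t gf gc xi phi hp F) {d : CName} (hd : Name.cn d ∉ phi)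
    (v : Option CName) : StoreInv φ c t gf gc (Function.update xi d (some v)) phi hp F := by
  refine { hI with xi := fun d' K c' hK hxi => ?_ }
  have hne : d' ≠ d := by
    rintro rfl
    exact hd (hI.conts_dom d' K hK)
  rw [Function.update_of_ne hne] at hxi
  exact hI.xi d' K c' hK hxi

theorem append_singleton_of_not_isP (hI : StoreInv φ c t gf gc xi phi hp F) (ha : a.isP = false)
    (hfresh : a.intro ∩ phi = ∅) {av : Set Name} (hav : VisO φ c t av) :
    StoreInv φ c (t ++ [a]) gf gc xi (phi ∪ a.intro) hp (extendF F a.intro av) := by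
  have hS : oNames φ c t ⊆ oNames φ c (t ++ [a]) := oNames_mono φ c t [a]
  refine ⟨?_, hI.fresh.append_singleton (hI.phi_eq ▸ hfresh), hI.heap.mono hS,
    hI.funs.mono hS, hI.conts.mono hS, fun d K hK => Or.inl (hI.conts_dom d K hK),
    fun d K c' hK hxi => hS (hI.xi d K c' hK hxi),
    hI.records.append_singleton_of_not_isP ha hav⟩
  rw [hI.phi_eq, introNames_append_singleton, Set.union_assoc]

end StoreInv

def ConfigInv (φ : Set Name) (c : CName) (t : List Act) : Cfg → Prop
  | .act a => Even t.length ∧ StoreInv φ c t a.gf a.gc a.xi a.phi a.hp a.Fm ∧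
      Name.cn a.cur ∈ oNames φ c t ∧ a.tm.occNames ⊆ oNames φ c t
  | .pas p => Odd t.length ∧ StoreInv φ c t p.gf p.gc p.xi p.phi p.hp p.Fm ∧
      VisO φ c t p.avail

namespace ConfigInv

variable {φ : Set Name} {c : CName} {t : List Act} {v b : Bool} {C C' : Cfg} {α : Act}

theorem step_tau (hI : ConfigInv φ c t C) (hs : Step v b C none C') : ConfigInv φ c t C' := by
  cases hs with
  | tau hred =>
    obtain ⟨hev, hS, hcur, htm⟩ := hI
    obtain ⟨htm', hheap', hcur'⟩ := hred.occNames_subset htm hS.heap hcur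
    exact ⟨hev, { hS with heap := hheap' }, hcur', htm'⟩

theorem step_act (hφ : ∀ d, Name.cn d ∉ φ) {a : ACfg} (hI : ConfigInv φ c t (.act a))
    (hs : Step v b (.act a) (some α) C') :
    α.isP = true ∧ ConfigInv φ c (t ++ [α]) C' ∧ Step true b (.act a) (some α) C' := by
  obtain ⟨hev, hS, hcur, htm⟩ := hI
  have hodd : Odd (t ++ [α]).length := by simpa using hev.add_one
  cases hs with
  | @pa V c₀ A g' _ _ _ _ _ _ hV hdec hlin hfresh =>
    have hS' := hS.append_singleton_of_isP (a := .pa c₀ A) rfl hfresh (hdec.storedNamesIn.mono htm)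
    exact ⟨rfl, ⟨hodd, hS', VisO.append_pa hφ hS.fresh hS.records hcur _⟩,
      Step.pa hV hdec hlin hfresh⟩
  | @pq K V f A c₀ c' g' _ _ _ phi _ _ hK hV hdec hlin hty hfresh hc' =>
    dsimp only at hS hcur htm ⊢
    have hKS := (Tm.occNames_subset_fill K _).trans htm
    have hfV := (Tm.occNames_subset_fill_of_isECtx hK _).trans htm
    simp only [Tm.occNames, Set.union_subset_iff, Set.singleton_subset_iff] at hfV
    have hS' := hS.append_singleton_of_isP (a := .pq f A c') rfl hfresh
      (hdec.storedNamesIn.mono hfV.2)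
    refine ⟨rfl, ⟨hodd, ?_, VisO.append_pq hS.fresh hS.records hfV.1 A c'⟩,
      Step.pq hK hV hdec hlin hty hfresh hc'⟩
    rw [Set.union_assoc]
    have hP : oNames φ c (t ++ [.pq f A c']) = oNames φ c t :=
      oNames_append_singleton_of_isP φ c rfl
    exact hS'.pushCont (Or.inr (Or.inr rfl)) (hP ▸ hKS) (hP ▸ hcur)

theorem step_pas {p : PCfg} (hI : ConfigInv φ c t (.pas p))
    (hs : Step v b (.pas p) (some α) C') :
    α.isP = false ∧ ConfigInv φ c (t ++ [α]) C' ∧ (v = true → α.subject ∈ p.avail) ∧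
      (α.subject ∈ p.avail → Step true b (.pas p) (some α) C') := by
  obtain ⟨hodd, hS, hav⟩ := hI
  have hev : Even (t ++ [α]).length := by simpa using hodd.add_one
  cases hs with
  | @oa K c₀ c' A _ _ _ _ _ _ av _ hty hlin hfresh hK hxi hvis hbra =>
    have hN := oNames_append_singleton_of_not_isP φ c (t := t) (a := .oa c₀ A) rfl
    refine ⟨rfl, ⟨hev, hS.append_singleton_of_not_isP (a := .oa c₀ A) rfl hfresh hav, ?_, ?_⟩, hvis,
      fun h => Step.oa hty hlin hfresh hK hxi (fun _ => h) hbra⟩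
    · exact oNames_mono φ c t _ (hS.xi c₀ K c' hK hxi)
    · rw [hN]
      refine (Tm.occNames_fill K _).trans (Set.union_subset_union ?_ ?_)
      · exact hS.conts c₀ K hK
      · exact (AVal.occNames_toTm A).subset
  | @oq V f A c₀ _ _ xi phi _ _ av tc hty hlin hcod hfresh hc₀ hV hvis =>
    have hN := oNames_append_singleton_of_not_isP φ c (t := t) (a := .oq f A c₀) rfl
    have hc₀phi : Name.cn c₀ ∉ phi := fun h => hfresh.subset ⟨Or.inr rfl, h⟩
    refine ⟨rfl, ⟨hev, ?_, ?_, ?_⟩, hvis,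
      fun h => Step.oq hty hlin hcod hfresh hc₀ hV (fun _ => h)⟩
    · rw [Set.union_assoc]
      exact (hS.updateXi hc₀phi tc).append_singleton_of_not_isP (a := .oq f A c₀) rfl hfresh hav
    · rw [hN]
      exact Or.inr (Or.inr rfl)
    · rw [hN]
      refine Set.union_subset_union (hS.funs f V hV) ?_
      exact (AVal.occNames_toTm A).trans_subset Set.subset_union_left

end ConfigInv

theorem ConfigInv.cfgInit {M : Tm} (hM : M.occNames = ∅) (ρ : List AVal) (c : CName) :
    ConfigInv (assignNames ρ) c [] (cfgInit M ρ c) := by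
  have hS : StoreInv (assignNames ρ) c [] (fun _ => none) (fun _ => none) (fun _ => none)
      (assignNames ρ ∪ {Name.cn c}) Heap.empty emptyF :=
    { phi_eq := by simp [introNames]
      fresh := FreshTr.nil
      heap := fun _ _ h => by cases h
      funs := fun _ _ h => by cases h
      conts := fun _ _ h => by cases h
      conts_dom := fun _ _ h => by cases h
      xi := fun _ _ _ h => by cases h
      records := RecordsVisO.nil }
  refine ⟨Even.zero, hS, Or.inl (Or.inr rfl), (Tm.occNames_msubst _ _).trans ?_⟩
  rw [hM, Set.empty_union]
  rintro n ⟨_, hV, hn⟩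
  obtain ⟨A, hA, rfl⟩ := List.mem_map.1 hV
  exact Or.inl (Or.inl ⟨A, hA, (AVal.occNames_toTm A).subset hn⟩)

theorem Step.of_vis {b : Bool} {C C' : Cfg} {α : Option Act} (h : Step true b C α C') :
    Step false b C α C' := by
  cases h with
  | tau hred => exact .tau hred
  | pa hV hdec hlin hfresh => exact .pa hV hdec hlin hfresh
  | pq hK hV hdec hlin hty hfresh hc => exact .pq hK hV hdec hlin hty hfresh hc
  | oa hty hlin hfresh hK hxi _ hbra => exact .oa hty hlin hfresh hK hxi nofun hbra
  | oq hty hlin hcod hfresh hc hV _ => exact .oq hty hlin hcod hfresh hc hV nofun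

theorem Steps.of_vis {b : Bool} {C D : Cfg} {t : List Act} (h : Steps true b C t D) :
    Steps false b C t D := by
  induction h with
  | nil => exact .nil
  | tau h₁ _ ih => exact .tau h₁.of_vis ih
  | cons h₁ _ ih => exact .cons h₁.of_vis ih

/-- O-visibility of `tr`, read as the continuation of the already played trace `t₀` -/
def OVisibleFrom (φ : Set Name) (c : CName) (t₀ tr : List Act) : Prop :=
  ∀ pre α rest, tr = pre ++ α :: rest → α.isP = false → Odd (t₀ ++ pre).length →
    ∃ S, VisO φ c (t₀ ++ pre) S ∧ α.subject ∈ S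

theorem oVisibleFrom_nil (φ : Set Name) (c : CName) (t₀ : List Act) :
    OVisibleFrom φ c t₀ [] := by
  intro pre α rest h
  simp at h

theorem oVisibleFrom_cons {φ : Set Name} {c : CName} {t₀ tr : List Act} {a : Act} :
    OVisibleFrom φ c t₀ (a :: tr) ↔
      (a.isP = false → Odd t₀.length → ∃ S, VisO φ c t₀ S ∧ a.subject ∈ S) ∧
        OVisibleFrom φ c (t₀ ++ [a]) tr := by
  constructor
  · intro h
    refine ⟨fun ha ho => by simpa using h [] a tr rfl ha (by simpa), ?_⟩
    intro pre α rest hr hα ho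
    simpa using h (a :: pre) α rest (by simp [hr]) hα (by simpa using ho)
  · rintro ⟨h₀, h⟩ pre α rest hr hα ho
    cases pre with
    | nil =>
      obtain ⟨rfl, rfl⟩ := List.cons_eq_cons.1 hr
      simpa using h₀ hα (by simpa using ho)
    | cons b pre =>
      obtain ⟨rfl, rfl⟩ := List.cons_eq_cons.1 hr
      simpa using h pre α rest rfl hα (by simpa using ho)

theorem oVisible_iff_oVisibleFrom (φ : Set Name) (c : CName) (t : List Act) :
    OVisible φ c t ↔ OVisibleFrom φ c [] t := by
  constructor
  · rintro ⟨hq, ha⟩ pre α rest rfl hα hodd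
    rw [List.nil_append] at hodd ⊢
    have hpre : pre ++ [α] <+: pre ++ α :: rest := ⟨rest, by simp⟩
    cases α with
    | oq f A d => exact hq pre f A d hpre hodd.add_one
    | oa d A => exact ha pre d A hpre hodd.add_one
    | pa | pq => cases hα
  · intro h
    have hodd : ∀ pre : List Act, Even (pre.length + 1) → Odd ([] ++ pre).length := by
      simp [Nat.even_add_one, Nat.not_even_iff_odd]
    refine ⟨fun pre f A d ⟨rest, hr⟩ hev => ?_, fun pre d A ⟨rest, hr⟩ hev => ?_⟩
    · exact h pre (.oq f A d) rest (by simp [← hr]) rfl (hodd pre hev)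
    · exact h pre (.oa d A) rest (by simp [← hr]) rfl (hodd pre hev)

section Simulation

variable {φ : Set Name} {c : CName} {b : Bool}

theorem Steps.oVisibleFrom (hφ : ∀ d, Name.cn d ∉ φ) {C D : Cfg} {tr : List Act}
    (hs : Steps true b C tr D) {t₀ : List Act} (hI : ConfigInv φ c t₀ C) :
    OVisibleFrom φ c t₀ tr := by
  induction hs generalizing t₀ with
  | nil => exact oVisibleFrom_nil φ c t₀
  | tau h₁ _ ih => exact ih (hI.step_tau h₁)
  | @cons C _ _ a _ h₁ _ ih =>
    cases C with
    | act =>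
      obtain ⟨hP, hI', -⟩ := hI.step_act hφ h₁
      exact oVisibleFrom_cons.2 ⟨fun hO => absurd hP (by simp [hO]), ih hI'⟩
    | pas p =>
      obtain ⟨-, hI', hvis, -⟩ := hI.step_pas h₁
      exact oVisibleFrom_cons.2 ⟨fun _ _ => ⟨p.avail, hI.2.2, hvis rfl⟩, ih hI'⟩

theorem Steps.vis_of_oVisibleFrom (hφ : ∀ d, Name.cn d ∉ φ) {C D : Cfg} {tr : List Act}
    (hs : Steps false b C tr D) {t₀ : List Act} (hI : ConfigInv φ c t₀ C)
    (hv : OVisibleFrom φ c t₀ tr) : Steps true b C tr D := by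
  induction hs generalizing t₀ with
  | nil => exact .nil
  | tau h₁ _ ih =>
    have hI' := hI.step_tau h₁
    cases h₁ with
    | tau hred => exact .tau (.tau hred) (ih hI' hv)
  | @cons C _ _ a _ h₁ _ ih =>
    cases C with
    | act =>
      obtain ⟨-, hI', h₁'⟩ := hI.step_act hφ h₁
      exact .cons h₁' (ih hI' (oVisibleFrom_cons.1 hv).2)
    | pas p =>
      obtain ⟨hO, hI', -, h₁'⟩ := hI.step_pas h₁
      obtain ⟨S, hS, ha⟩ := (oVisibleFrom_cons.1 hv).1 hO hI.1
      rw [hS.unique hI.2.1.fresh hI.2.2] at ha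
      exact .cons (h₁' ha) (ih hI' (oVisibleFrom_cons.1 hv).2)

end Simulation

theorem gosc_traces_are_ovisible_hosc_traces_general
    (Γ : TyCtx) (τ : Ty) (M : Tm) (hM : CrFreeTm Γ M τ)
    (ρ : List AVal) (c : CName) (t : List Act) :
    t ∈ Traces true false (cfgInit M ρ c) ↔
      (t ∈ Traces false false (cfgInit M ρ c) ∧ OVisible (assignNames ρ) c t) := by
  have hφ : ∀ d, Name.cn d ∉ assignNames ρ := fun d ⟨A, _, hd⟩ => A.cn_not_mem_names d hd
  have hI := ConfigInv.cfgInit (Tm.occNames_eq_empty hM.noName hM.synt.2.1) ρ c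
  rw [oVisible_iff_oVisibleFrom]
  constructor
  · rintro ⟨D, hs⟩
    exact ⟨⟨D, hs.of_vis⟩, hs.oVisibleFrom hφ hI⟩
  · rintro ⟨⟨D, hs⟩, hv⟩
    exact ⟨D, hs.vis_of_oVisibleFrom hφ hI hv⟩

/-- the GOSC[HOSC] LTS generates exactly the O-visible traces of the
HOSC[HOSC] LTS: t ∈ Tr_GOSC(C_{M,vis}^{ρ,c}) iff t ∈ Tr_HOSC(C_M^{ρ,c}) and t is
O-visible, for cr-free HOSC terms. -/
theorem gosc_traces_are_ovisible_hosc_traces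
    (Γ : TyCtx) (τ : Ty) (M : Tm) (hM : CrFreeTm Γ M τ)
    (ρ : List AVal) (hρ : AssignTyped ρ Γ) (c : CName) (hc : c.ty = τ) (t : List Act) :
    t ∈ Traces true false (cfgInit M ρ c) ↔
      (t ∈ Traces false false (cfgInit M ρ c) ∧ OVisible (assignNames ρ) c t) :=
  gosc_traces_are_ovisible_hosc_traces_general Γ τ M hM ρ c t

end OGS
end

section
/- (P-bracketing of HOS contexts) Let C = C_{h,K,γ}^{γ⃗ᵢ,c} be a passive context configuration where h, K, γ are built from HOS syntax and (A⃗ᵢ, γ⃗ᵢ) ∈ AVal(γ)(Γ). Then every trace in Tr_HOSC(C) is P-bracketed. -/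
set_option maxHeartbeats 1000000
set_option autoImplicit true

namespace OGS

/-! HOS syntax contains no `callcc`, `throw` or continuation constants, and neither the
◦-translation nor any transition of the LTS creates one. Hence every term, stored evaluation
context, function value and heap cell reachable from the context configuration is control-free,
so τ-steps never change the current continuation. By induction along the run, the current
continuation of an active configuration is then top_P of the trace so far: an O-question makes
its own continuation current, and an O-answer on `d` resumes `ξ d`, which is `tern τ'` when
`d = c` and otherwise the value of top_P just before the P-question that introduced `d`.
A P-answer is given on the current continuation, that is, on top_P. -/

def Tm.ControlFree : Tm → Prop
  | .callcc _ _ | .throw _ _ _ | .contV _ _ _ | .contE _ _ _ => False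
  | .pair a b => a.ControlFree ∧ b.ControlFree
  | .fst a => a.ControlFree
  | .snd a => a.ControlFree
  | .lam _ a => a.ControlFree
  | .fix _ _ a => a.ControlFree
  | .app a b => a.ControlFree ∧ b.ControlFree
  | .newref _ a => a.ControlFree
  | .deref a => a.ControlFree
  | .assign a b => a.ControlFree ∧ b.ControlFree
  | .ifte a b c => a.ControlFree ∧ b.ControlFree ∧ c.ControlFree
  | .arith _ a b => a.ControlFree ∧ b.ControlFree
  | .cmp _ a b => a.ControlFree ∧ b.ControlFree
  | .refeq a b => a.ControlFree ∧ b.ControlFree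
  | _ => True

namespace Tm

theorem controlFree_of_inFrag_HOS {M : Tm} (hM : M.inFrag .HOS) : M.ControlFree := by
  induction M <;> simp_all [inFrag, subterms, headOK, Frag.hasCont, ControlFree]

theorem ControlFree.toCirc {M : Tm} (hM : M.ControlFree) : M.toCirc.ControlFree := by
  induction M <;> simp_all [Tm.toCirc, ControlFree]

theorem ControlFree.subst {M V : Tm} (k : ℕ) (hM : M.ControlFree) (hV : V.ControlFree) :
    (M.subst k V).ControlFree := by
  induction M generalizing k <;> simp_all [Tm.subst, ControlFree]
  split_ifs <;> simp_all [ControlFree]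

theorem ControlFree.fill {K M : Tm} (hK : K.ControlFree) (hM : M.ControlFree) :
    (K.fill M).ControlFree := by
  induction K <;> simp_all [Tm.fill, ControlFree]

theorem ControlFree.of_fill {K M : Tm} (h : (K.fill M).ControlFree) : K.ControlFree := by
  induction K <;> simp_all [Tm.fill, ControlFree]

theorem controlFree_ofBool (b : Bool) : (Tm.ofBool b).ControlFree := by
  cases b <;> simp [Tm.ofBool, ControlFree]

end Tm

theorem IsECtx.controlFree_of_fill {K M : Tm} (hK : IsECtx K) (h : (K.fill M).ControlFree) :
    M.ControlFree := by
  induction hK <;> simp_all [Tm.fill, Tm.ControlFree]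

theorem AVal.controlFree_toTm (A : AVal) : A.toTm.ControlFree := by
  induction A <;> simp_all [AVal.toTm, Tm.ControlFree]

def ControlFreeEnv {α : Type*} (g : α → Option Tm) : Prop :=
  ∀ a V, g a = some V → V.ControlFree

namespace ControlFreeEnv

variable {α : Type*}

theorem empty : ControlFreeEnv (fun _ : α => none) := by
  simp [ControlFreeEnv]

theorem update [DecidableEq α] {g : α → Option Tm} {V : Tm} (hg : ControlFreeEnv g)
    (hV : V.ControlFree) (a : α) : ControlFreeEnv (Function.update g a (some V)) := by
  intro b W hb
  rcases eq_or_ne b a with rfl | hne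
  · simp_all
  · exact hg b W (by simpa [hne] using hb)

theorem heapUpd {h : Heap} {V : Tm} (hh : ControlFreeEnv h) (hV : V.ControlFree) (ℓ : ℕ) :
    ControlFreeEnv (h.upd ℓ V) := by
  intro ℓ' W hW
  unfold Heap.upd at hW
  split_ifs at hW
  · exact Option.some_inj.mp hW ▸ hV
  · exact hh ℓ' W hW

theorem joinF {g g' : FEnv} (hg : ControlFreeEnv g) (hg' : ControlFreeEnv g') :
    ControlFreeEnv (joinF g g') := by
  intro f V hf
  cases hgf : g f <;> simp [OGS.joinF, hgf] at hf
  · exact hg' f V hf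
  · exact hg f V (hf ▸ hgf)

theorem stackF {γs : List FEnv} (h : ∀ ρ ∈ γs, ControlFreeEnv ρ) :
    ControlFreeEnv (stackF γs) := by
  induction γs with
  | nil => exact empty
  | cons ρ γs ih =>
    exact (h ρ List.mem_cons_self).joinF (ih fun ρ' hρ' => h ρ' (List.mem_cons_of_mem ρ hρ'))

theorem heapToCirc {h : Heap} (hh : ControlFreeEnv h) : ControlFreeEnv h.toCirc := by
  intro ℓ V hV
  obtain ⟨W, hW, rfl⟩ := Option.map_eq_some_iff.mp hV
  exact (hh ℓ W hW).toCirc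

end ControlFreeEnv

theorem Heap.controlFreeEnv_of_inFrag_HOS {h : Heap} (hh : h.inFrag .HOS) : ControlFreeEnv h :=
  fun ℓ V hV => Tm.controlFree_of_inFrag_HOS (hh ℓ V hV)

theorem Decomp.controlFreeEnv {V : Tm} {σ : Ty} {A : AVal} {g : FEnv} (hD : Decomp V σ A g)
    (hV : V.ControlFree) : ControlFreeEnv g := by
  induction hD with
  | fn _ => exact ControlFreeEnv.empty.update hV _
  | pair _ _ _ iha ihb => exact (iha hV.1).joinF (ihb hV.2)
  | _ => exact ControlFreeEnv.empty

theorem CtxDecomp.controlFreeEnv {γ : List Tm} {Γ : TyCtx} {As : List AVal} {γs : List FEnv}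
    (hd : CtxDecomp γ Γ As γs) (hγ : ∀ V ∈ γ, V.toCirc.ControlFree) :
    ∀ ρ ∈ γs, ControlFreeEnv ρ := by
  obtain ⟨hγΓ, hAsΓ, hγsΓ, hF, -⟩ := hd
  intro ρ hρ
  obtain ⟨i, hi, rfl⟩ := List.getElem_of_mem hρ
  have hD := hF.get (i := i) (by simp only [List.length_zip]; omega)
    (by simp only [List.length_zip]; omega)
  simp only [List.get_eq_getElem, List.getElem_zip] at hD
  exact hD.controlFreeEnv (hγ _ (List.getElem_mem _))

theorem RedBase.controlFree {M M' : Tm} {h h' : Heap} (hr : RedBase M h M' h')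
    (hM : M.ControlFree) (hh : ControlFreeEnv h) : M'.ControlFree ∧ ControlFreeEnv h' := by
  cases hr with
  | @beta _ N _ _ _ => exact ⟨(show N.ControlFree from hM.1).subst 0 hM.2, hh⟩
  | @fixbeta _ _ N _ _ _ =>
    exact ⟨((show N.ControlFree from hM.1).subst 0 hM.2).subst 0 hM.1, hh⟩
  | fst _ _ => exact ⟨hM.1, hh⟩
  | snd _ _ => exact ⟨hM.2, hh⟩
  | iftt => exact ⟨hM.2.1, hh⟩
  | ifff => exact ⟨hM.2.2, hh⟩
  | arith => exact ⟨trivial, hh⟩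
  | cmp | refeq => exact ⟨Tm.controlFree_ofBool _, hh⟩
  | deref hl => exact ⟨hh _ _ hl, hh⟩
  | @newref _ V _ _ _ _ => exact ⟨trivial, hh.heapUpd (show V.ControlFree from hM) _⟩
  | assign _ _ => exact ⟨trivial, hh.heapUpd hM.2 _⟩

theorem ERed.controlFree {M N : Tm} {d d' : CName} {h h' : Heap} (hr : ERed M d h N d' h')
    (hM : M.ControlFree) (hh : ControlFreeEnv h) :
    N.ControlFree ∧ d' = d ∧ ControlFreeEnv h' := by
  cases hr with
  | base hK hb =>
    obtain ⟨hM', hh'⟩ := hb.controlFree (hK.controlFree_of_fill hM) hh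
    exact ⟨hM.of_fill.fill hM', rfl, hh'⟩
  | callcc hK => exact (hK.controlFree_of_fill hM).elim
  | throw hK _ _ => exact (hK.controlFree_of_fill hM).elim

/-- `ξ d = some (some d')` records the continuation `d'` that becomes current once `d` is
answered. -/
def ParentsAreTopP (c : CName) (τ' : Ty) (s : List Act) (gc : KEnv) (xi : XiEnv) : Prop :=
  ∀ d d' K, gc d = some K → xi d = some (some d') →
    (d = c ∧ d' = tern τ') ∨
      ∃ t₁ t₂ f A, s = t₁ ++ [Act.pq f A d] ++ t₂ ∧ TopP c τ' t₁ (some d')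

structure EnvInv (c : CName) (τ' : Ty) (s : List Act) (gf : FEnv) (gc : KEnv) (xi : XiEnv)
    (phi : Set Name) (hp : Heap) : Prop where
  fun_controlFree : ControlFreeEnv gf
  ctx_controlFree : ControlFreeEnv gc
  heap_controlFree : ControlFreeEnv hp
  ctx_dom : ∀ d, gc d ≠ none → Name.cn d ∈ phi
  parents : ParentsAreTopP c τ' s gc xi

def Cfg.BracketInv (c : CName) (τ' : Ty) (s : List Act) : Cfg → Prop
  | .act A => A.tm.ControlFree ∧ TopP c τ' s (some A.cur) ∧
      EnvInv c τ' s A.gf A.gc A.xi A.phi A.hp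
  | .pas P => EnvInv c τ' s P.gf P.gc P.xi P.phi P.hp

section Invariant

variable {c : CName} {τ' : Ty} {s : List Act} {gc : KEnv} {xi : XiEnv}

namespace ParentsAreTopP

theorem append (h : ParentsAreTopP c τ' s gc xi) (u : List Act) :
    ParentsAreTopP c τ' (s ++ u) gc xi := by
  intro d d' K hK hxi
  rcases h d d' K hK hxi with h | ⟨t₁, t₂, f, A, rfl, htop⟩
  · exact Or.inl h
  · exact Or.inr ⟨t₁, t₂ ++ u, f, A, by simp, htop⟩

theorem pq (h : ParentsAreTopP c τ' s gc xi) {d : CName} (htop : TopP c τ' s (some d))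
    (f : FName) (A : AVal) (d₀ : CName) (K : Tm) :
    ParentsAreTopP c τ' (s ++ [.pq f A d₀]) (Function.update gc d₀ (some K))
      (Function.update xi d₀ (some (some d))) := by
  intro e e' K' hK hxi
  rcases eq_or_ne e d₀ with rfl | hne
  · obtain rfl : d = e' := by simpa using hxi
    exact Or.inr ⟨s, [], f, A, by simp, htop⟩
  · rw [Function.update_of_ne hne] at hK hxi
    exact h.append _ e e' K' hK hxi

theorem oq (h : ParentsAreTopP c τ' s gc xi) {d₀ : CName} (hfresh : gc d₀ = none) (a : Act)
    (r : Option CName) :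
    ParentsAreTopP c τ' (s ++ [a]) gc (Function.update xi d₀ (some r)) := by
  intro e e' K hK hxi
  rcases eq_or_ne e d₀ with rfl | hne
  · simp [hfresh] at hK
  · rw [Function.update_of_ne hne] at hxi
    exact h.append _ e e' K hK hxi

theorem topP_oa (h : ParentsAreTopP c τ' s gc xi) {d d' : CName} {K : Tm} (hK : gc d = some K)
    (hxi : xi d = some (some d')) (A : AVal) : TopP c τ' (s ++ [.oa d A]) (some d') := by
  rcases h d d' K hK hxi with ⟨rfl, rfl⟩ | ⟨t₁, t₂, f, A', rfl, htop⟩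
  · exact .ansInit s A
  · exact .ansJust f A' d A htop

end ParentsAreTopP

theorem EnvInv.mono {gf : FEnv} {phi phi' : Set Name} {hp : Heap}
    (hE : EnvInv c τ' s gf gc xi phi hp) (u : List Act) (hphi : phi ⊆ phi') :
    EnvInv c τ' (s ++ u) gf gc xi phi' hp :=
  { hE with ctx_dom := fun d hd => hphi (hE.ctx_dom d hd), parents := hE.parents.append u }

theorem Step.bracketInv {vis bra : Bool} {C C' : Cfg} {a : Option Act}
    (hs : Step vis bra C a C') (hI : C.BracketInv c τ' s) :
    C'.BracketInv c τ' (s ++ a.toList) := by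
  cases hs with
  | tau hr =>
    obtain ⟨hM, hT, hE⟩ := hI
    obtain ⟨hN, rfl, hh⟩ := hr.controlFree hM hE.heap_controlFree
    rw [Option.toList_none, List.append_nil]
    exact ⟨hN, hT, { hE with heap_controlFree := hh }⟩
  | pa _ hD _ _ =>
    obtain ⟨hM, -, hE⟩ := hI
    exact { hE.mono _ Set.subset_union_left with
      fun_controlFree := hE.fun_controlFree.joinF (hD.controlFreeEnv hM) }
  | @pq _ V _ _ _ d₀ _ _ _ _ _ _ _ hK _ hD _ _ _ _ =>
    obtain ⟨hM, hT, hE⟩ := hI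
    have hV : V.ControlFree := (hK.controlFree_of_fill hM).2
    refine ⟨hE.fun_controlFree.joinF (hD.controlFreeEnv hV),
      hE.ctx_controlFree.update hM.of_fill d₀, hE.heap_controlFree, fun d hd => ?_,
      hE.parents.pq hT _ _ d₀ _⟩
    rcases eq_or_ne d d₀ with rfl | hne
    · exact Or.inr rfl
    · exact Or.inl (Or.inl (hE.ctx_dom d (by simpa [hne] using hd)))
  | oa _ _ _ hK hxi _ _ =>
    exact ⟨(hI.ctx_controlFree _ _ hK).fill (AVal.controlFree_toTm _),
      hI.parents.topP_oa hK hxi _, hI.mono _ Set.subset_union_left⟩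
  | @oq _ f A d₀ _ gc _ _ _ _ _ _ _ _ _ hdisj _ hgf _ =>
    have hfresh : gc d₀ = none := by
      by_contra hne
      exact (Set.eq_empty_iff_forall_notMem.mp hdisj) _ ⟨Or.inr rfl, hI.ctx_dom d₀ hne⟩
    exact ⟨⟨hI.fun_controlFree _ _ hgf, AVal.controlFree_toTm _⟩, .quest s f A d₀,
      { hI with ctx_dom := fun d hd => Or.inl (Or.inl (hI.ctx_dom d hd)),
                parents := hI.parents.oq hfresh _ _ }⟩

theorem Step.topP_of_pa {vis bra : Bool} {C C' : Cfg} {d : CName} {A : AVal}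
    (hs : Step vis bra C (some (.pa d A)) C') (hI : C.BracketInv c τ' s) :
    TopP c τ' s (some d) := by
  cases hs with
  | pa => exact hI.2.1

theorem Steps.topP_of_pa {vis bra : Bool} {C C' : Cfg} {t : List Act}
    (hs : Steps vis bra C t C') (hI : C.BracketInv c τ' s) {pre : List Act} {d : CName}
    {A : AVal} (hpre : pre ++ [Act.pa d A] <+: t) : TopP c τ' (s ++ pre) (some d) := by
  induction hs generalizing s pre with
  | nil => simp at hpre
  | tau hstep _ ih => exact ih (by simpa using hstep.bracketInv hI) hpre
  | cons hstep _ ih =>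
    cases pre with
    | nil =>
      obtain rfl := (List.cons_prefix_cons.mp hpre).1
      simpa using hstep.topP_of_pa hI
    | cons b pre =>
      obtain ⟨rfl, hpre'⟩ := List.cons_prefix_cons.mp hpre
      simpa using ih (hstep.bracketInv hI) hpre'

end Invariant

theorem cfgCtx_bracketInv {Γ : TyCtx} {h : Heap} {K : Tm} {γ : List Tm} {As : List AVal}
    {γs : List FEnv} {c : CName} {τ' : Ty} (hhf : h.inFrag .HOS) (hKf : K.inFrag .HOS)
    (hγf : ∀ V ∈ γ, V.inFrag .HOS) (hd : CtxDecomp γ Γ As γs) :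
    (cfgCtx h K As γs c τ').BracketInv c τ' [] := by
  refine ⟨.stackF (hd.controlFreeEnv fun V hV =>
      (Tm.controlFree_of_inFrag_HOS (hγf V hV)).toCirc),
    ControlFreeEnv.empty.update (Tm.controlFree_of_inFrag_HOS hKf).toCirc c,
    (Heap.controlFreeEnv_of_inFrag_HOS hhf).heapToCirc, fun d hd => ?_, fun d d' K' hK hxi => ?_⟩
  all_goals rcases eq_or_ne d c with rfl | hne
  · exact Or.inl (Or.inl (Or.inr rfl))
  · simp [hne] at hd
  · exact Or.inl ⟨rfl, by simpa [eq_comm] using hxi⟩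
  · simp [hne] at hK

theorem pbracketing_hos_contexts_general
    (Γ : TyCtx) (h : Heap) (K : Tm) (γ : List Tm) (τ' : Ty)
    (hhf : Heap.inFrag Frag.HOS h) (hKf : Tm.inFrag Frag.HOS K)
    (hγf : ∀ V ∈ γ, Tm.inFrag Frag.HOS V)
    (As : List AVal) (γs : List FEnv) (hd : CtxDecomp γ Γ As γs)
    (c : CName) :
    ∀ t ∈ Traces false false (cfgCtx h K As γs c τ'),
      PBracketed c τ' t := by
  rintro t ⟨C', hsteps⟩ pre d A hpre
  exact ⟨some d, by simpa using hsteps.topP_of_pa (cfgCtx_bracketInv hhf hKf hγf hd) hpre, rfl⟩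

/-- P-bracketing of HOS contexts: every trace generated in the
HOSC[HOSC] LTS from a context configuration C_{h,K,γ}^{γ⃗ᵢ,c} built from HOS syntax
is P-bracketed. -/
theorem pbracketing_hos_contexts
    (Γ : TyCtx) (St : LocTy) (h : Heap) (K : Tm) (γ : List Tm) (τ τ' : Ty)
    (hh : HeapTyped St h) (hhf : Heap.inFrag Frag.HOS h)
    (hK : IsECtx K) (hKf : Tm.inFrag Frag.HOS K) (hKt : Typed St [] (some τ) K τ')
    (hγ : SubstTyped St γ Γ) (hγf : ∀ V ∈ γ, Tm.inFrag Frag.HOS V)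
    (As : List AVal) (γs : List FEnv) (hd : CtxDecomp γ Γ As γs)
    (c : CName) (hc : c.ty = τ) (hcc : Name.cn c ∉ circNames) :
    ∀ t ∈ Traces false false (cfgCtx h K As γs c τ'),
      PBracketed c τ' t :=
  pbracketing_hos_contexts_general Γ h K γ τ' hhf hKf hγf As γs hd c

end OGS
end
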